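/- arXiv:2402.11174 — 7 statements merged into one kernel-verified Lean document; each statement's English description precedes it below -/
import Mathlib

section
/- Let (X,d,m) be a metric measure space, p ≥ 1, and let (ρ_n)_{n∈ℕ} be nonnegative symmetric Borel mollifiers on {(x,y) : x ≠ y} satisfying parts (A) (with constant L) and (C) of Assumption 1. Fix x₀ ∈ X and u ∈ L^p(X,m), and for R > 0, n ∈ ℕ set II_a(R,n) := ∫_X |u(y)|^p ( ∫_{{x : d(x,y) ≥ R and d(y,x₀) > 2 d(x,x₀)}} ρ_n(x,y) dm(x) ) dm(y). Then lim_{R→∞} limsup_{n→∞} II_a(R,n) = 0. -/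
open MeasureTheory Filter Topology Metric Set ENNReal

/-!
If `R ≤ d(x, y)` and `2 d(x, x₀) < d(y, x₀)`, the triangle inequality gives `d(y, x₀) > 2R/3`.
So only points `y` outside the ball of radius `2R/3` around `x₀` contribute to `II_a(R, n)`,
and for them the inner integral is at most the constant `C` of Assumption 1 (C) (after using
the symmetry of `ρ n`). So `II_a(R, n) ≤ C ∫_{d(y,x₀) > 2R/3} |u|^p`, uniformly in `n`,
and this tail of the integrable function `|u|^p` tends to `0`.
-/

theorem MeasureTheory.MemLp.lintegral_ofReal_abs_rpow_ne_top {α : Type*} [MeasurableSpace α]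
    {μ : Measure α} {u : α → ℝ} {p : ℝ} (hp : 0 < p) (hu : MemLp u (ENNReal.ofReal p) μ) :
    ∫⁻ y, ENNReal.ofReal (|u y| ^ p) ∂μ ≠ ∞ := by
  have h := lintegral_rpow_enorm_lt_top_of_eLpNorm_lt_top (ENNReal.ofReal_pos.2 hp).ne'
    ofReal_ne_top hu.eLpNorm_lt_top
  simp_rw [ENNReal.toReal_ofReal hp.le, Real.enorm_eq_ofReal_abs,
    ENNReal.ofReal_rpow_of_nonneg (abs_nonneg _) hp.le] at h
  exact h.ne

theorem two_mul_div_three_lt_dist {X : Type*} [PseudoMetricSpace X] {x y x₀ : X} {R : ℝ}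
    (hR : R ≤ dist x y) (hx : 2 * dist x x₀ < dist y x₀) : 2 * R / 3 < dist y x₀ := by
  linarith [dist_triangle_right x y x₀]

section Tail

variable {X : Type*} [PseudoMetricSpace X] [MeasurableSpace X] [OpensMeasurableSpace X]

theorem tendsto_measure_compl_closedBall_atTop (ν : Measure X) [IsFiniteMeasure ν] (x₀ : X) :
    Tendsto (fun R : ℝ => ν (closedBall x₀ R)ᶜ) atTop (𝓝 0) := by
  have hempty : ⋂ R : ℝ, (closedBall x₀ R)ᶜ = ∅ :=
    eq_empty_of_forall_notMem fun y hy =>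
      (mem_iInter.1 hy (dist y x₀)) (mem_closedBall.2 le_rfl)
  simpa only [Function.comp_def, hempty, measure_empty] using
    tendsto_measure_iInter_atTop (s := fun R => (closedBall x₀ R)ᶜ)
      (fun _ => measurableSet_closedBall.compl.nullMeasurableSet)
      (fun _ _ h => compl_subset_compl.2 (closedBall_subset_closedBall h))
      ⟨0, measure_ne_top ν _⟩

theorem tendsto_setLIntegral_compl_closedBall_atTop {μ : Measure X} {f : X → ℝ≥0∞}
    (hf : ∫⁻ x, f x ∂μ ≠ ∞) (x₀ : X) :
    Tendsto (fun R : ℝ => ∫⁻ x in (closedBall x₀ R)ᶜ, f x ∂μ) atTop (𝓝 0) := by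
  have := isFiniteMeasure_withDensity hf
  simpa only [withDensity_apply f measurableSet_closedBall.compl] using
    tendsto_measure_compl_closedBall_atTop (μ.withDensity f) x₀

end Tail

section Kernel

variable {X : Type*} [PseudoMetricSpace X] [MeasurableSpace X] {μ : Measure X}

theorem setLIntegral_le_indicator_compl_closedBall {k : X → X → ℝ≥0∞} {R₀ R : ℝ} {C : ℝ≥0∞}
    (hR : R₀ ≤ R) (hk : ∀ y, ∫⁻ x in {x | R₀ ≤ dist x y}, k x y ∂μ ≤ C) (x₀ y : X) :
    ∫⁻ x in {x | R ≤ dist x y ∧ 2 * dist x x₀ < dist y x₀}, k x y ∂μ ≤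
      (closedBall x₀ (2 * R / 3))ᶜ.indicator (fun _ => C) y := by
  by_cases hy : y ∈ (closedBall x₀ (2 * R / 3))ᶜ
  · rw [indicator_of_mem hy]
    exact (lintegral_mono_set fun x hx => hR.trans hx.1).trans (hk y)
  · have hempty : {x | R ≤ dist x y ∧ 2 * dist x x₀ < dist y x₀} = ∅ :=
      eq_empty_of_forall_notMem fun x hx =>
        hy (not_le.2 (two_mul_div_three_lt_dist hx.1 hx.2))
    simp only [hempty, Measure.restrict_empty, lintegral_zero_measure, zero_le]

theorem lintegral_mul_setLIntegral_le_setLIntegral_compl_closedBall_mul {k : X → X → ℝ≥0∞}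
    {g : X → ℝ≥0∞} {R₀ R : ℝ} {C : ℝ≥0∞} (hR : R₀ ≤ R)
    (hk : ∀ y, ∫⁻ x in {x | R₀ ≤ dist x y}, k x y ∂μ ≤ C) (hC : C ≠ ∞) (x₀ : X) :
    ∫⁻ y, g y * ∫⁻ x in {x | R ≤ dist x y ∧ 2 * dist x x₀ < dist y x₀}, k x y ∂μ ∂μ ≤
      (∫⁻ y in (closedBall x₀ (2 * R / 3))ᶜ, g y ∂μ) * C :=
  calc ∫⁻ y, g y * ∫⁻ x in {x | R ≤ dist x y ∧ 2 * dist x x₀ < dist y x₀}, k x y ∂μ ∂μ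
      ≤ ∫⁻ y, (closedBall x₀ (2 * R / 3))ᶜ.indicator (fun y => g y * C) y ∂μ :=
        lintegral_mono fun y => by
          rw [indicator_mul_right]
          gcongr
          exact setLIntegral_le_indicator_compl_closedBall hR hk x₀ y
    _ ≤ ∫⁻ y in (closedBall x₀ (2 * R / 3))ᶜ, g y * C ∂μ := lintegral_indicator_le _ _
    _ = (∫⁻ y in (closedBall x₀ (2 * R / 3))ᶜ, g y ∂μ) * C := lintegral_mul_const' C _ hC

end Kernel

theorem IIa_limsup_zero_general
    {X : Type*} [MetricSpace X]
    [MeasurableSpace X] [BorelSpace X]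
    (μ : Measure X)
    (p : ℝ) (hp : 1 ≤ p)
    (ρ : ℕ → X → X → ℝ≥0∞)
    (hsymm : ∀ n x y, ρ n x y = ρ n y x)
    -- Assumption 1 (C)
    (hC : ∀ᶠ R : ℝ in atTop, ∃ C : ℝ≥0∞, C < ⊤ ∧
      ∀ (x : X) (n : ℕ), ∫⁻ y in {y | R ≤ dist x y}, ρ n x y ∂μ ≤ C)
    (x₀ : X) (u : X → ℝ) (hu : MemLp u (ENNReal.ofReal p) μ) :
    Tendsto (fun R : ℝ =>
        limsup (fun n =>
          ∫⁻ y, ENNReal.ofReal (|u y| ^ p) *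
            (∫⁻ x in {x | R ≤ dist x y ∧ 2 * dist x x₀ < dist y x₀}, ρ n x y ∂μ) ∂μ) atTop)
      atTop (nhds 0) := by
  obtain ⟨R₀, C, hC_lt, hCb⟩ := hC.exists
  have hcol : ∀ n y, ∫⁻ x in {x | R₀ ≤ dist x y}, ρ n x y ∂μ ≤ C := fun n y => by
    simpa only [hsymm n _ y, dist_comm _ y] using hCb y n
  have htail : Tendsto (fun R : ℝ =>
      (∫⁻ y in (closedBall x₀ (2 * R / 3))ᶜ, ENNReal.ofReal (|u y| ^ p) ∂μ) * C) atTop (𝓝 0) := by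
    simpa using ENNReal.Tendsto.mul_const
      ((tendsto_setLIntegral_compl_closedBall_atTop
        (hu.lintegral_ofReal_abs_rpow_ne_top (by linarith)) x₀).comp
        ((tendsto_id.const_mul_atTop two_pos).atTop_div_const three_pos))
      (Or.inr hC_lt.ne)
  refine tendsto_of_tendsto_of_tendsto_of_le_of_le' tendsto_const_nhds htail
    (Eventually.of_forall fun _ => zero_le) ?_
  filter_upwards [eventually_ge_atTop R₀] with R hR
  exact limsup_le_of_le (by isBoundedDefault)
    (Eventually.of_forall fun n =>
      lintegral_mul_setLIntegral_le_setLIntegral_compl_closedBall_mul hR (hcol n) hC_lt.ne x₀)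

/-- Estimate (2.4) in the proof of the generalized Maz'ya–Shaposhnikova formula:
the term `II_a(R,n)` satisfies `lim_{R→∞} limsup_{n→∞} II_a(R,n) = 0`. -/
theorem IIa_limsup_zero
    {X : Type*} [MetricSpace X] [CompleteSpace X] [TopologicalSpace.SeparableSpace X]
    [MeasurableSpace X] [BorelSpace X]
    (μ : Measure X) [IsLocallyFiniteMeasure μ] [μ.IsOpenPosMeasure]
    (p : ℝ) (hp : 1 ≤ p)
    (ρ : ℕ → X → X → ℝ≥0∞)
    (hmeas : ∀ n, Measurable (Function.uncurry (ρ n)))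
    (hsymm : ∀ n x y, ρ n x y = ρ n y x)
    (L : ℝ) (hL : 0 ≤ L)
    -- Assumption 1 (A)
    (hA : ∀ x : X,
      Tendsto (fun R : ℝ =>
          limsup (fun n => ∫⁻ y in {y | R ≤ dist x y}, ρ n x y ∂μ) atTop)
        atTop (nhds (ENNReal.ofReal L)) ∧
      Tendsto (fun R : ℝ =>
          liminf (fun n => ∫⁻ y in {y | R ≤ dist x y}, ρ n x y ∂μ) atTop)
        atTop (nhds (ENNReal.ofReal L)))
    -- Assumption 1 (C)
    (hC : ∀ᶠ R : ℝ in atTop, ∃ C : ℝ≥0∞, C < ⊤ ∧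
      ∀ (x : X) (n : ℕ), ∫⁻ y in {y | R ≤ dist x y}, ρ n x y ∂μ ≤ C)
    (x₀ : X) (u : X → ℝ) (hu : MemLp u (ENNReal.ofReal p) μ) :
    Tendsto (fun R : ℝ =>
        limsup (fun n =>
          ∫⁻ y, ENNReal.ofReal (|u y| ^ p) *
            (∫⁻ x in {x | R ≤ dist x y ∧ 2 * dist x x₀ < dist y x₀}, ρ n x y ∂μ) ∂μ) atTop)
      atTop (nhds 0) :=
  IIa_limsup_zero_general μ p hp ρ hsymm hC x₀ u hu
end

section
/- Let (X,d,m) be a metric measure space, p ≥ 1, and let (ρ_n)_{n∈ℕ} be nonnegative symmetric Borel mollifiers on {(x,y) : x ≠ y} satisfying parts (A) (with constant L) and (C) of Assumption 1. Fix x₀ ∈ X and u ∈ L^p(X,m), and for R > 0, n ∈ ℕ set II_b(R,n) := ∫_X |u(x)|^p ( ∫_{{y : d(x,y) ≥ R and d(y,x₀) > 2 d(x,x₀)}} ρ_n(x,y) dm(y) ) dm(x). Then lim_{R→∞} liminf_{n→∞} II_b(R,n) = lim_{R→∞} limsup_{n→∞} II_b(R,n) = L‖u‖_{L^p}^p. 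-/
open MeasureTheory Filter Topology Metric Set ENNReal

/-!
Weighting by `|u|^p` turns `II_b(R,n)` into `∫ outerTailMass μ (ρ n) x₀ R dν` for the finite measure
`ν = |u|^p m`, where `tailMass μ (ρ n) R x = ∫_{d(x,y) ≥ R} ρ_n(x,y) dm(y)` and `outerTailMass` adds
the constraint `d(y,x₀) > 2 d(x,x₀)`. For `x ∈ B(x₀, R/3)` that constraint is automatic, as
`d(y,x₀) ≥ d(x,y) - d(x,x₀) > 2R/3`, and `liminf_n tailMass ≥ L` because it decreases to `L` in `R`;
Fatou's lemma therefore gives `liminf_n II_b(R,n) ≥ L ν(B(x₀, R/3))`. Conversely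
`outerTailMass ≤ tailMass ≤ C` for `R ≥ R₀` by (C), so the reverse Fatou lemma bounds
`limsup_n II_b(R,n)` by `∫ limsup_n tailMass dν`, which tends to `L ν(X)` by dominated convergence.
Both bounds tend to `L ‖u‖_p^p`.
-/

theorem tendsto_liminf_limsup_of_squeeze {ι κ β : Type*} [CompleteLinearOrder β]
    [TopologicalSpace β] [OrderTopology β] {l : Filter ι} {l' : Filter κ} [l'.NeBot]
    {f : ι → κ → β} {g h : ι → β} {a : β} (hg : Tendsto g l (𝓝 a)) (hh : Tendsto h l (𝓝 a))
    (hgf : ∀ᶠ i in l, g i ≤ liminf (f i) l') (hfh : ∀ᶠ i in l, limsup (f i) l' ≤ h i) :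
    Tendsto (fun i => liminf (f i) l') l (𝓝 a) ∧ Tendsto (fun i => limsup (f i) l') l (𝓝 a) := by
  have hle : ∀ i, liminf (f i) l' ≤ limsup (f i) l' := fun i => liminf_le_limsup
  exact ⟨tendsto_of_tendsto_of_tendsto_of_le_of_le' hg hh hgf
      (hfh.mono fun i hi => (hle i).trans hi),
    tendsto_of_tendsto_of_tendsto_of_le_of_le' hg hh (hgf.mono fun i hi => hi.trans (hle i)) hfh⟩

namespace MeasureTheory

variable {α β : Type*} [MeasurableSpace α] [MeasurableSpace β]

theorem measurable_setLIntegral_preimage_prodMk {ν : Measure β} [SFinite ν]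
    {f : α → β → ℝ≥0∞} (hf : Measurable (Function.uncurry f)) {s : Set (α × β)}
    (hs : MeasurableSet s) : Measurable fun x => ∫⁻ y in Prod.mk x ⁻¹' s, f x y ∂ν := by
  simp_rw [← lintegral_indicator (measurable_prodMk_left hs)]
  exact (hf.indicator hs).lintegral_prod_right'

theorem mul_measure_le_liminf_lintegral (ν : Measure α) {ι : Type*} {u : Filter ι}
    [u.IsCountablyGenerated] {s : Set α} (hs : MeasurableSet s) {f : ι → α → ℝ≥0∞}
    (hf : ∀ i, AEMeasurable (f i) ν) {c : ℝ≥0∞} (hc : ∀ x ∈ s, c ≤ liminf (fun i => f i x) u) :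
    c * ν s ≤ liminf (fun i => ∫⁻ x, f i x ∂ν) u :=
  calc c * ν s = ∫⁻ _ in s, c ∂ν := (setLIntegral_const s c).symm
    _ ≤ ∫⁻ x in s, liminf (fun i => f i x) u ∂ν := setLIntegral_mono' hs hc
    _ ≤ ∫⁻ x, liminf (fun i => f i x) u ∂ν := setLIntegral_le_lintegral s _
    _ ≤ liminf (fun i => ∫⁻ x, f i x ∂ν) u := lintegral_liminf_le' hf

theorem limsup_lintegral_le_of_le_const (ν : Measure α) [IsFiniteMeasure ν]
    {f : ℕ → α → ℝ≥0∞} (hf : ∀ n, Measurable (f n)) {C : ℝ≥0∞} (hC : C ≠ ∞)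
    (hfC : ∀ n x, f n x ≤ C) :
    limsup (fun n => ∫⁻ x, f n x ∂ν) atTop ≤ ∫⁻ x, limsup (fun n => f n x) atTop ∂ν :=
  limsup_lintegral_le (fun _ => C) hf (fun n => ae_of_all _ (hfC n))
    (by simpa using mul_ne_top hC (measure_ne_top ν univ))

theorem tendsto_measure_ball_atTop {X : Type*} [PseudoMetricSpace X] [MeasurableSpace X]
    (ν : Measure X) (x₀ : X) : Tendsto (fun r => ν (ball x₀ r)) atTop (𝓝 (ν univ)) := by
  have := tendsto_measure_iUnion_atTop (μ := ν)
    fun r r' (h : r ≤ r') => ball_subset_ball (x := x₀) h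
  rwa [iUnion_eq_univ_iff.2 fun x => ⟨dist x x₀ + 1, by simp [mem_ball]⟩] at this

end MeasureTheory

section TailMass

variable {X : Type*} [MetricSpace X] [MeasurableSpace X]

noncomputable def tailMass (μ : Measure X) (k : X → X → ℝ≥0∞) (R : ℝ) (x : X) : ℝ≥0∞ :=
  ∫⁻ y in {y | R ≤ dist x y}, k x y ∂μ

noncomputable def outerTailMass (μ : Measure X) (k : X → X → ℝ≥0∞) (x₀ : X) (R : ℝ) (x : X) :
    ℝ≥0∞ :=
  ∫⁻ y in {y | R ≤ dist x y ∧ 2 * dist x x₀ < dist y x₀}, k x y ∂μ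

variable {μ : Measure X} {k : X → X → ℝ≥0∞}

theorem tailMass_anti (x : X) : Antitone fun R => tailMass μ k R x :=
  fun _ _ hR => lintegral_mono_set fun _ hy => le_trans hR hy

theorem outerTailMass_le_tailMass (x₀ : X) (R : ℝ) (x : X) :
    outerTailMass μ k x₀ R x ≤ tailMass μ k R x :=
  lintegral_mono_set fun _ hy => hy.1

theorem outerTailMass_eq_tailMass_of_mem_ball {x₀ x : X} {R : ℝ} (hx : x ∈ ball x₀ (R / 3)) :
    outerTailMass μ k x₀ R x = tailMass μ k R x := by
  have hset : {y | R ≤ dist x y ∧ 2 * dist x x₀ < dist y x₀} = {y | R ≤ dist x y} := by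
    refine Set.ext fun y => and_iff_left_of_imp fun (hy : R ≤ dist x y) => ?_
    have := dist_triangle_right x y x₀
    rw [mem_ball] at hx
    linarith
  rw [outerTailMass, tailMass, hset]

variable [SecondCountableTopology X] [BorelSpace X] [SFinite μ]

theorem measurable_tailMass (hk : Measurable (Function.uncurry k)) (R : ℝ) :
    Measurable (tailMass μ k R) :=
  measurable_setLIntegral_preimage_prodMk hk (measurableSet_le measurable_const measurable_dist)

theorem measurable_outerTailMass (hk : Measurable (Function.uncurry k)) (x₀ : X) (R : ℝ) :
    Measurable (outerTailMass μ k x₀ R) :=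
  measurable_setLIntegral_preimage_prodMk hk <|
    (measurableSet_le measurable_const measurable_dist).inter <|
      measurableSet_lt ((measurable_fst.dist measurable_const).const_mul 2)
        (measurable_snd.dist measurable_const)

end TailMass

section Mollifiers

variable {X : Type*} [MetricSpace X] [MeasurableSpace X] {μ : Measure X}
  {ρ : ℕ → X → X → ℝ≥0∞} {ℓ : ℝ≥0∞}

theorem le_liminf_tailMass {x : X}
    (h : Tendsto (fun R => liminf (fun n => tailMass μ (ρ n) R x) atTop) atTop (𝓝 ℓ)) (R : ℝ) :
    ℓ ≤ liminf (fun n => tailMass μ (ρ n) R x) atTop := by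
  have hanti : Antitone fun R => liminf (fun n => tailMass μ (ρ n) R x) atTop :=
    fun _ _ hR => liminf_le_liminf (Eventually.of_forall fun _ => tailMass_anti x hR)
  exact hanti.le_of_tendsto h R

variable [SecondCountableTopology X] [BorelSpace X] [SFinite μ] (ν : Measure X)

theorem mul_measure_ball_le_liminf_lintegral_outerTailMass
    (hρ : ∀ n, Measurable (Function.uncurry (ρ n)))
    (hA : ∀ x, Tendsto (fun R => liminf (fun n => tailMass μ (ρ n) R x) atTop) atTop (𝓝 ℓ))
    (x₀ : X) (R : ℝ) :
    ℓ * ν (ball x₀ (R / 3)) ≤ liminf (fun n => ∫⁻ x, outerTailMass μ (ρ n) x₀ R x ∂ν) atTop :=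
  mul_measure_le_liminf_lintegral ν measurableSet_ball
    (fun n => (measurable_outerTailMass (hρ n) x₀ R).aemeasurable) fun x hx => by
      simpa only [outerTailMass_eq_tailMass_of_mem_ball hx] using le_liminf_tailMass (hA x) R

variable [IsFiniteMeasure ν] {C : ℝ≥0∞}

theorem limsup_lintegral_outerTailMass_le (hρ : ∀ n, Measurable (Function.uncurry (ρ n)))
    (x₀ : X) {R : ℝ} (hC : C ≠ ∞) (hbound : ∀ x n, tailMass μ (ρ n) R x ≤ C) :
    limsup (fun n => ∫⁻ x, outerTailMass μ (ρ n) x₀ R x ∂ν) atTop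
      ≤ ∫⁻ x, limsup (fun n => tailMass μ (ρ n) R x) atTop ∂ν :=
  (limsup_lintegral_le_of_le_const ν (fun n => measurable_outerTailMass (hρ n) x₀ R) hC
      fun n x => (outerTailMass_le_tailMass x₀ R x).trans (hbound x n)).trans <|
    lintegral_mono fun x =>
      limsup_le_limsup (Eventually.of_forall fun _ => outerTailMass_le_tailMass x₀ R x)

theorem tendsto_lintegral_limsup_tailMass (hρ : ∀ n, Measurable (Function.uncurry (ρ n)))
    (hA : ∀ x, Tendsto (fun R => limsup (fun n => tailMass μ (ρ n) R x) atTop) atTop (𝓝 ℓ))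
    {R₀ : ℝ} (hC : C ≠ ∞) (hbound : ∀ x n, tailMass μ (ρ n) R₀ x ≤ C) :
    Tendsto (fun R => ∫⁻ x, limsup (fun n => tailMass μ (ρ n) R x) atTop ∂ν) atTop
      (𝓝 (ℓ * ν univ)) := by
  rw [← lintegral_const]
  refine tendsto_lintegral_filter_of_dominated_convergence (fun _ => C)
    (Eventually.of_forall fun R => .limsup fun n => measurable_tailMass (hρ n) R)
    ((eventually_ge_atTop R₀).mono fun R hR => ae_of_all _ fun x =>
      limsup_le_of_le (by isBoundedDefault)
        (Eventually.of_forall fun n => (tailMass_anti x hR).trans (hbound x n)))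
    (by simpa using mul_ne_top hC (measure_ne_top ν univ)) (ae_of_all _ hA)

theorem tendsto_liminf_limsup_lintegral_outerTailMass
    (hρ : ∀ n, Measurable (Function.uncurry (ρ n)))
    (hA_sup : ∀ x, Tendsto (fun R => limsup (fun n => tailMass μ (ρ n) R x) atTop) atTop (𝓝 ℓ))
    (hA_inf : ∀ x, Tendsto (fun R => liminf (fun n => tailMass μ (ρ n) R x) atTop) atTop (𝓝 ℓ))
    (hℓ : ℓ ≠ ∞)
    (hC : ∀ᶠ R : ℝ in atTop, ∃ C : ℝ≥0∞, C < ⊤ ∧ ∀ (x : X) (n : ℕ), tailMass μ (ρ n) R x ≤ C)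
    (x₀ : X) :
    Tendsto (fun R => liminf (fun n => ∫⁻ x, outerTailMass μ (ρ n) x₀ R x ∂ν) atTop) atTop
        (𝓝 (ℓ * ν univ)) ∧
      Tendsto (fun R => limsup (fun n => ∫⁻ x, outerTailMass μ (ρ n) x₀ R x ∂ν) atTop) atTop
        (𝓝 (ℓ * ν univ)) := by
  obtain ⟨R₀, C, hC_lt, hC_le⟩ := hC.exists
  have hball : Tendsto (fun R : ℝ => ν (ball x₀ (R / 3))) atTop (𝓝 (ν univ)) :=
    (tendsto_measure_ball_atTop ν x₀).comp (tendsto_id.atTop_div_const (by norm_num))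
  refine tendsto_liminf_limsup_of_squeeze (ENNReal.Tendsto.const_mul hball (Or.inr hℓ))
    (tendsto_lintegral_limsup_tailMass ν hρ hA_sup hC_lt.ne hC_le)
    (Eventually.of_forall (mul_measure_ball_le_liminf_lintegral_outerTailMass ν hρ hA_inf x₀))
    ((eventually_ge_atTop R₀).mono fun R hR => limsup_lintegral_outerTailMass_le ν hρ x₀
      hC_lt.ne fun x n => (tailMass_anti x hR).trans (hC_le x n))

end Mollifiers

theorem IIb_limit_general
    {X : Type*} [MetricSpace X] [TopologicalSpace.SeparableSpace X]
    [MeasurableSpace X] [BorelSpace X]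
    (μ : Measure X) [IsLocallyFiniteMeasure μ]
    (p : ℝ) (hp : 1 ≤ p)
    (ρ : ℕ → X → X → ℝ≥0∞)
    (hmeas : ∀ n, Measurable (Function.uncurry (ρ n)))
    (L : ℝ)
    -- Assumption 1 (A)
    (hA : ∀ x : X,
      Tendsto (fun R : ℝ =>
          limsup (fun n => ∫⁻ y in {y | R ≤ dist x y}, ρ n x y ∂μ) atTop)
        atTop (nhds (ENNReal.ofReal L)) ∧
      Tendsto (fun R : ℝ =>
          liminf (fun n => ∫⁻ y in {y | R ≤ dist x y}, ρ n x y ∂μ) atTop)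
        atTop (nhds (ENNReal.ofReal L)))
    -- Assumption 1 (C)
    (hC : ∀ᶠ R : ℝ in atTop, ∃ C : ℝ≥0∞, C < ⊤ ∧
      ∀ (x : X) (n : ℕ), ∫⁻ y in {y | R ≤ dist x y}, ρ n x y ∂μ ≤ C)
    (x₀ : X) (u : X → ℝ) (hu : MemLp u (ENNReal.ofReal p) μ) :
    Tendsto (fun R : ℝ =>
        liminf (fun n =>
          ∫⁻ x, ENNReal.ofReal (|u x| ^ p) *
            (∫⁻ y in {y | R ≤ dist x y ∧ 2 * dist x x₀ < dist y x₀}, ρ n x y ∂μ) ∂μ) atTop)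
      atTop (nhds (ENNReal.ofReal L * ∫⁻ x, ENNReal.ofReal (|u x| ^ p) ∂μ)) ∧
    Tendsto (fun R : ℝ =>
        limsup (fun n =>
          ∫⁻ x, ENNReal.ofReal (|u x| ^ p) *
            (∫⁻ y in {y | R ≤ dist x y ∧ 2 * dist x x₀ < dist y x₀}, ρ n x y ∂μ) ∂μ) atTop)
      atTop (nhds (ENNReal.ofReal L * ∫⁻ x, ENNReal.ofReal (|u x| ^ p) ∂μ)) := by
  set w : X → ℝ≥0∞ := fun x => ENNReal.ofReal (|u x| ^ p)
  have hw : AEMeasurable w μ :=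
    (hu.aestronglyMeasurable.aemeasurable.abs.pow_const p).ennreal_ofReal
  have hw_int : ∫⁻ x, w x ∂μ ≠ ∞ := by
    have := hu.integrable_norm_rpow (ofReal_pos.2 (by linarith)).ne' ofReal_ne_top
    simpa [toReal_ofReal (by linarith : 0 ≤ p)] using this.lintegral_lt_top.ne
  have := isFiniteMeasure_withDensity hw_int
  have hν : ∀ R n, ∫⁻ x, outerTailMass μ (ρ n) x₀ R x ∂μ.withDensity w
      = ∫⁻ x, w x * outerTailMass μ (ρ n) x₀ R x ∂μ := fun R n =>
    lintegral_withDensity_eq_lintegral_mul₀ hw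
      (measurable_outerTailMass (hmeas n) x₀ R).aemeasurable
  have key := tendsto_liminf_limsup_lintegral_outerTailMass (μ.withDensity w) hmeas
    (fun x => (hA x).1) (fun x => (hA x).2) ofReal_ne_top hC x₀
  simp only [hν, withDensity_apply _ MeasurableSet.univ, Measure.restrict_univ] at key
  exact key

/-- Estimate (2.5) in the proof of the generalized Maz'ya–Shaposhnikova formula:
`lim_{R→∞} liminf_{n→∞} II_b(R,n) = lim_{R→∞} limsup_{n→∞} II_b(R,n) = L ‖u‖_p^p`. -/
theorem IIb_limit
    {X : Type*} [MetricSpace X] [CompleteSpace X] [TopologicalSpace.SeparableSpace X]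
    [MeasurableSpace X] [BorelSpace X]
    (μ : Measure X) [IsLocallyFiniteMeasure μ] [μ.IsOpenPosMeasure]
    (p : ℝ) (hp : 1 ≤ p)
    (ρ : ℕ → X → X → ℝ≥0∞)
    (hmeas : ∀ n, Measurable (Function.uncurry (ρ n)))
    (hsymm : ∀ n x y, ρ n x y = ρ n y x)
    (L : ℝ) (hL : 0 ≤ L)
    -- Assumption 1 (A)
    (hA : ∀ x : X,
      Tendsto (fun R : ℝ =>
          limsup (fun n => ∫⁻ y in {y | R ≤ dist x y}, ρ n x y ∂μ) atTop)
        atTop (nhds (ENNReal.ofReal L)) ∧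
      Tendsto (fun R : ℝ =>
          liminf (fun n => ∫⁻ y in {y | R ≤ dist x y}, ρ n x y ∂μ) atTop)
        atTop (nhds (ENNReal.ofReal L)))
    -- Assumption 1 (C)
    (hC : ∀ᶠ R : ℝ in atTop, ∃ C : ℝ≥0∞, C < ⊤ ∧
      ∀ (x : X) (n : ℕ), ∫⁻ y in {y | R ≤ dist x y}, ρ n x y ∂μ ≤ C)
    (x₀ : X) (u : X → ℝ) (hu : MemLp u (ENNReal.ofReal p) μ) :
    Tendsto (fun R : ℝ =>
        liminf (fun n =>
          ∫⁻ x, ENNReal.ofReal (|u x| ^ p) *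
            (∫⁻ y in {y | R ≤ dist x y ∧ 2 * dist x x₀ < dist y x₀}, ρ n x y ∂μ) ∂μ) atTop)
      atTop (nhds (ENNReal.ofReal L * ∫⁻ x, ENNReal.ofReal (|u x| ^ p) ∂μ)) ∧
    Tendsto (fun R : ℝ =>
        limsup (fun n =>
          ∫⁻ x, ENNReal.ofReal (|u x| ^ p) *
            (∫⁻ y in {y | R ≤ dist x y ∧ 2 * dist x x₀ < dist y x₀}, ρ n x y ∂μ) ∂μ) atTop)
      atTop (nhds (ENNReal.ofReal L * ∫⁻ x, ENNReal.ofReal (|u x| ^ p) ∂μ)) :=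
  IIb_limit_general μ p hp ρ hmeas L hA hC x₀ u hu
end

section
/- Let (X,d,m) be a metric measure space, p ≥ 1, and let (ρ_n)_{n∈ℕ} be nonnegative symmetric Borel mollifiers on {(x,y) : x ≠ y} satisfying parts (A) (with constant L) and (C) of Assumption 1. Fix x₀ ∈ X and u ∈ L^p(X,m), and for R > 0, n ∈ ℕ set III(R,n) := ∬_{{(x,y) : d(x,y) ≥ R and (1/2) d(x,x₀) ≤ d(y,x₀) ≤ 2 d(x,x₀)}} |u(x)−u(y)|^p ρ_n(x,y) dm(x) dm(y). Then lim_{R→∞} limsup_{n→∞} III(R,n) = 0. -/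
/-!
On the region of integration `d(x, y) ≥ R` while `d(x, x₀)` and `d(y, x₀)` agree up to a factor
`2`, so both points lie at distance at least `R / 3` from `x₀`. Bounding
`|u x - u y| ^ p ≤ 2 ^ (p - 1) (|u x| ^ p + |u y| ^ p)` and using the symmetry of `ρ` to exchange
the roles of `x` and `y`, `III(R, n)` is at most `2 ^ p C` times the `L^p` mass of `u` outside
the ball of radius `R / 3` about `x₀`, where `C` is the uniform bound of Assumption 1 (C). That
tail vanishes as `R → ∞`, uniformly in `n`.
-/

open MeasureTheory Filter Topology Metric Set ENNReal

theorem enorm_sub_rpow_le {E : Type*} [NormedAddCommGroup E] {p : ℝ} (hp : 1 ≤ p) (a b : E) :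
    ‖a - b‖ₑ ^ p ≤ 2 ^ (p - 1) * (‖a‖ₑ ^ p + ‖b‖ₑ ^ p) :=
  (ENNReal.rpow_le_rpow enorm_sub_le (by linarith)).trans (rpow_add_le_mul_rpow_add_rpow _ _ hp)

theorem div_three_le_dist_of_dist_le_two_mul {X : Type*} [PseudoMetricSpace X] {x y z : X}
    {R : ℝ} (hR : R ≤ dist x y) (hyz : dist y z ≤ 2 * dist x z) : R / 3 ≤ dist x z := by
  linarith [dist_triangle_right x y z]

section

variable {α : Type*} [MeasurableSpace α] {μ : Measure α}

theorem lintegral_lintegral_add_mul_of_symm [SFinite μ] {f : α → ℝ≥0∞} (hf : AEMeasurable f μ)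
    {κ : α → α → ℝ≥0∞} (hκ : Measurable (Function.uncurry κ)) (hsymm : ∀ x y, κ x y = κ y x) :
    ∫⁻ x, ∫⁻ y, (f x + f y) * κ x y ∂μ ∂μ = 2 * ∫⁻ x, ∫⁻ y, f x * κ x y ∂μ ∂μ := by
  have hfst : AEMeasurable (Function.uncurry fun x y => f x * κ x y) (μ.prod μ) :=
    hf.comp_fst.mul hκ.aemeasurable
  have hsnd : AEMeasurable (Function.uncurry fun x y => f y * κ x y) (μ.prod μ) :=
    hf.comp_snd.mul hκ.aemeasurable
  have hswap : ∫⁻ x, ∫⁻ y, f y * κ x y ∂μ ∂μ = ∫⁻ x, ∫⁻ y, f x * κ x y ∂μ ∂μ := by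
    rw [lintegral_lintegral_swap hsnd]
    exact lintegral_congr fun x => lintegral_congr fun y => by rw [hsymm]
  calc ∫⁻ x, ∫⁻ y, (f x + f y) * κ x y ∂μ ∂μ
      = ∫⁻ x, (∫⁻ y, f x * κ x y ∂μ) + ∫⁻ y, f y * κ x y ∂μ ∂μ := by
        refine lintegral_congr fun x => ?_
        simp_rw [add_mul]
        exact lintegral_add_left' ((hκ.comp measurable_prodMk_left).const_mul (f x)).aemeasurable _
    _ = 2 * ∫⁻ x, ∫⁻ y, f x * κ x y ∂μ ∂μ := by
        have hmeas : AEMeasurable (fun x => ∫⁻ y, f x * κ x y ∂μ) μ := hfst.lintegral_prod_right'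
        rw [lintegral_add_left' hmeas, hswap, two_mul]

theorem lintegral_lintegral_add_mul_le_of_symm [SFinite μ] {f : α → ℝ≥0∞} (hf : AEMeasurable f μ)
    {κ : α → α → ℝ≥0∞} (hκ : Measurable (Function.uncurry κ)) (hsymm : ∀ x y, κ x y = κ y x)
    {C : ℝ≥0∞} (hC : ∀ x, ∫⁻ y, κ x y ∂μ ≤ C) :
    ∫⁻ x, ∫⁻ y, (f x + f y) * κ x y ∂μ ∂μ ≤ 2 * C * ∫⁻ x, f x ∂μ := by
  rw [lintegral_lintegral_add_mul_of_symm hf hκ hsymm, mul_assoc, mul_comm C,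
    ← lintegral_mul_const'' _ hf]
  gcongr with x
  have hκx : Measurable fun y => κ x y := hκ.comp measurable_prodMk_left
  rw [lintegral_const_mul (f x) hκx]
  exact mul_le_mul_right (hC x) _

end

section

variable {X : Type*} [PseudoMetricSpace X] [MeasurableSpace X] [BorelSpace X] {μ : Measure X}

theorem tendsto_setLIntegral_le_dist_atTop {f : X → ℝ≥0∞} (hf : ∫⁻ x, f x ∂μ ≠ ∞) (x₀ : X) :
    Tendsto (fun r : ℝ => ∫⁻ x in {x | r ≤ dist x x₀}, f x ∂μ) atTop (𝓝 0) := by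
  have hs (r : ℝ) : MeasurableSet {x | r ≤ dist x x₀} :=
    (isClosed_le continuous_const (continuous_id.dist continuous_const)).measurableSet
  have := isFiniteMeasure_withDensity hf
  have h := tendsto_measure_iInter_atTop (μ := μ.withDensity f)
    (fun r => (hs r).nullMeasurableSet) (fun r s hrs x hx => hrs.trans hx) ⟨0, measure_ne_top _ _⟩
  have hempty : ⋂ r : ℝ, {x | r ≤ dist x x₀} = ∅ :=
    iInter_eq_empty_iff.2 fun x => ⟨dist x x₀ + 1, by simp⟩
  simpa [hempty, Function.comp_def, withDensity_apply _ (hs _)] using h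

theorem lintegral_lintegral_comparable_dist_le [SecondCountableTopology X] [SFinite μ]
    {E : Type*} [NormedAddCommGroup E] {p : ℝ} (hp : 1 ≤ p) {ρ : X → X → ℝ≥0∞}
    (hρ : Measurable (Function.uncurry ρ)) (hsymm : ∀ x y, ρ x y = ρ y x) {R : ℝ} {C : ℝ≥0∞}
    (hC : ∀ x, ∫⁻ y in {y | R ≤ dist x y}, ρ x y ∂μ ≤ C) (x₀ : X) {u : X → E}
    (hu : AEStronglyMeasurable u μ) :
    ∫⁻ x, ∫⁻ y in {y | R ≤ dist x y ∧ dist x x₀ / 2 ≤ dist y x₀ ∧ dist y x₀ ≤ 2 * dist x x₀},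
        ‖u x - u y‖ₑ ^ p * ρ x y ∂μ ∂μ
      ≤ 2 ^ p * C * ∫⁻ x in {x | R / 3 ≤ dist x x₀}, ‖u x‖ₑ ^ p ∂μ := by
  set A : Set X := {x | R / 3 ≤ dist x x₀}
  have hA : MeasurableSet A :=
    (isClosed_le continuous_const (continuous_id.dist continuous_const)).measurableSet
  set D : Set (X × X) := {z | R ≤ dist z.1 z.2}
  have hD : MeasurableSet D := measurableSet_le measurable_const measurable_dist
  set g : X → ℝ≥0∞ := fun x => 2 ^ (p - 1) * A.indicator (fun x => ‖u x‖ₑ ^ p) x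
  set κ : X → X → ℝ≥0∞ := fun x y => D.indicator (Function.uncurry ρ) (x, y)
  have hg : AEMeasurable g μ := ((hu.enorm.pow_const p).indicator hA).const_mul _
  have hκ : Measurable (Function.uncurry κ) := hρ.indicator hD
  have hκ_symm (x y : X) : κ x y = κ y x := by
    simp only [κ, D, indicator, mem_ofPred_eq, Function.uncurry_apply_pair, dist_comm x y, hsymm x y]
  have hκ_le (x : X) : ∫⁻ y, κ x y ∂μ ≤ C := by
    have hDx : MeasurableSet {y | R ≤ dist x y} :=
      (isClosed_le continuous_const (continuous_const.dist continuous_id)).measurableSet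
    rw [show (fun y => κ x y) = {y | R ≤ dist x y}.indicator (ρ x) from rfl,
      lintegral_indicator hDx]
    exact hC x
  have hpoint (x : X) :
      ∫⁻ y in {y | R ≤ dist x y ∧ dist x x₀ / 2 ≤ dist y x₀ ∧ dist y x₀ ≤ 2 * dist x x₀},
        ‖u x - u y‖ₑ ^ p * ρ x y ∂μ ≤ ∫⁻ y, (g x + g y) * κ x y ∂μ := by
    refine (setLIntegral_mono' (by measurability) fun y hy => ?_).trans
      (setLIntegral_le_lintegral _ _)
    obtain ⟨hxy, hyx, hy⟩ := hy
    have hxA : x ∈ A := div_three_le_dist_of_dist_le_two_mul hxy hy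
    have hyA : y ∈ A := div_three_le_dist_of_dist_le_two_mul (dist_comm x y ▸ hxy) (by linarith)
    simp only [g, κ, indicator_of_mem hxA, indicator_of_mem hyA,
      indicator_of_mem (show (x, y) ∈ D from hxy), Function.uncurry_apply_pair, ← mul_add]
    exact mul_le_mul_left (enorm_sub_rpow_le hp _ _) _
  have htwo : (2 : ℝ≥0∞) ^ p = 2 * 2 ^ (p - 1) := by
    conv_lhs => rw [show p = 1 + (p - 1) by ring]
    rw [ENNReal.rpow_add _ _ two_ne_zero ofNat_ne_top, ENNReal.rpow_one]
  calc _ ≤ ∫⁻ x, ∫⁻ y, (g x + g y) * κ x y ∂μ ∂μ := lintegral_mono hpoint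
    _ ≤ 2 * C * ∫⁻ x, g x ∂μ := lintegral_lintegral_add_mul_le_of_symm hg hκ hκ_symm hκ_le
    _ = 2 ^ p * C * ∫⁻ x in A, ‖u x‖ₑ ^ p ∂μ := by
      rw [lintegral_const_mul'' _ ((hu.enorm.pow_const p).indicator hA), lintegral_indicator hA,
        htwo]
      ring

end

theorem III_limsup_zero_general
    {X : Type*} [MetricSpace X] [TopologicalSpace.SeparableSpace X]
    [MeasurableSpace X] [BorelSpace X]
    (μ : Measure X) [IsLocallyFiniteMeasure μ]
    (p : ℝ) (hp : 1 ≤ p)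
    (ρ : ℕ → X → X → ℝ≥0∞)
    (hmeas : ∀ n, Measurable (Function.uncurry (ρ n)))
    (hsymm : ∀ n x y, ρ n x y = ρ n y x)
    -- Assumption 1 (C)
    (hC : ∀ᶠ R : ℝ in atTop, ∃ C : ℝ≥0∞, C < ⊤ ∧
      ∀ (x : X) (n : ℕ), ∫⁻ y in {y | R ≤ dist x y}, ρ n x y ∂μ ≤ C)
    (x₀ : X) (u : X → ℝ) (hu : MemLp u (ENNReal.ofReal p) μ) :
    Tendsto (fun R : ℝ =>
        limsup (fun n =>
          ∫⁻ x, ∫⁻ y in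
              {y | R ≤ dist x y ∧ dist x x₀ / 2 ≤ dist y x₀ ∧ dist y x₀ ≤ 2 * dist x x₀},
            ENNReal.ofReal (|u x - u y| ^ p) * ρ n x y ∂μ ∂μ) atTop)
      atTop (nhds 0) := by
  have := UniformSpace.secondCountable_of_separable X
  have hp0 : 0 ≤ p := zero_le_one.trans hp
  obtain ⟨R₀, C, hC_lt, hC_le⟩ := hC.exists
  have hfin : ∫⁻ x, ‖u x‖ₑ ^ p ∂μ ≠ ∞ := by
    have h := lintegral_rpow_enorm_lt_top_of_eLpNorm_lt_top
      (ofReal_ne_zero_iff.2 (zero_lt_one.trans_le hp)) ofReal_ne_top hu.2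
    rw [toReal_ofReal hp0] at h
    exact h.ne
  have htail : Tendsto (fun R : ℝ => 2 ^ p * C * ∫⁻ x in {x | R / 3 ≤ dist x x₀}, ‖u x‖ₑ ^ p ∂μ)
      atTop (𝓝 0) := by
    simpa using ENNReal.Tendsto.const_mul ((tendsto_setLIntegral_le_dist_atTop hfin x₀).comp
      (tendsto_id.atTop_div_const three_pos)) (Or.inr (mul_ne_top (by simp) hC_lt.ne))
  have henorm (a : ℝ) : ENNReal.ofReal (|a| ^ p) = ‖a‖ₑ ^ p := by
    rw [Real.enorm_eq_ofReal_abs, ofReal_rpow_of_nonneg (abs_nonneg a) hp0]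
  simp only [henorm]
  refine tendsto_of_tendsto_of_tendsto_of_le_of_le' tendsto_const_nhds htail
    (Eventually.of_forall fun _ => zero_le) ?_
  filter_upwards [eventually_ge_atTop R₀] with R hR
  refine limsup_le_of_le (by isBoundedDefault) (Eventually.of_forall fun n => ?_)
  exact lintegral_lintegral_comparable_dist_le hp (hmeas n) (hsymm n)
    (fun x => (lintegral_mono_set fun y hy => hR.trans hy).trans (hC_le x n)) x₀ hu.1

/-- Estimate (2.12) in the proof of the generalized Maz'ya–Shaposhnikova formula:
the term `III(R,n)` satisfies `lim_{R→∞} limsup_{n→∞} III(R,n) = 0`. -/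
theorem III_limsup_zero
    {X : Type*} [MetricSpace X] [CompleteSpace X] [TopologicalSpace.SeparableSpace X]
    [MeasurableSpace X] [BorelSpace X]
    (μ : Measure X) [IsLocallyFiniteMeasure μ] [μ.IsOpenPosMeasure]
    (p : ℝ) (hp : 1 ≤ p)
    (ρ : ℕ → X → X → ℝ≥0∞)
    (hmeas : ∀ n, Measurable (Function.uncurry (ρ n)))
    (hsymm : ∀ n x y, ρ n x y = ρ n y x)
    (L : ℝ) (hL : 0 ≤ L)
    -- Assumption 1 (A)
    (hA : ∀ x : X,
      Tendsto (fun R : ℝ =>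
          limsup (fun n => ∫⁻ y in {y | R ≤ dist x y}, ρ n x y ∂μ) atTop)
        atTop (nhds (ENNReal.ofReal L)) ∧
      Tendsto (fun R : ℝ =>
          liminf (fun n => ∫⁻ y in {y | R ≤ dist x y}, ρ n x y ∂μ) atTop)
        atTop (nhds (ENNReal.ofReal L)))
    -- Assumption 1 (C)
    (hC : ∀ᶠ R : ℝ in atTop, ∃ C : ℝ≥0∞, C < ⊤ ∧
      ∀ (x : X) (n : ℕ), ∫⁻ y in {y | R ≤ dist x y}, ρ n x y ∂μ ≤ C)
    (x₀ : X) (u : X → ℝ) (hu : MemLp u (ENNReal.ofReal p) μ) :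
    Tendsto (fun R : ℝ =>
        limsup (fun n =>
          ∫⁻ x, ∫⁻ y in
              {y | R ≤ dist x y ∧ dist x x₀ / 2 ≤ dist y x₀ ∧ dist y x₀ ≤ 2 * dist x x₀},
            ENNReal.ofReal (|u x - u y| ^ p) * ρ n x y ∂μ ∂μ) atTop)
      atTop (nhds 0) :=
  III_limsup_zero_general μ p hp ρ hmeas hsymm hC x₀ u hu
end

section
/- Let (X,d,m) be a metric measure space admitting the generalized asymptotic volume ratio AVR^V associated to V, and suppose there exists k > 0 such that m(B_r(x)) ≤ k V(r) for every x ∈ X and every sufficiently large r > 0. Let p ≥ 1 and let (ρ_n)_{n∈ℕ} be mollifiers of radial type satisfying the approximation of the identity associated to V (Condition 3). Then (ρ_n)_{n∈ℕ} satisfies Assumption 1 with constant L = AVR^V. -/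
open MeasureTheory Filter Topology Metric Set ENNReal

/-- The nonlocal energy `E_ρ(u) = ∬_{x ≠ y} |u(x) - u(y)|^p ρ(x,y) dm(x) dm(y)`. -/
noncomputable def energy {X : Type*} [MeasurableSpace X] (μ : Measure X) (p : ℝ)
    (ρ : X → X → ℝ≥0∞) (u : X → ℝ) : ℝ≥0∞ :=
  ∫⁻ x, ∫⁻ y in {y | y ≠ x}, ENNReal.ofReal (|u x - u y| ^ p) * ρ x y ∂μ ∂μ

/-!
Write `T_n(R) = ∫_{d(x,y) ≥ R} ρ̃_n(d(x,y)) dm(y)`. Tonelli applied to `ρ̃_n(t) = ∫_t^∞ (-ρ̃_n')`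
gives the layer-cake identity `T_n(R) + m(B_R(x)) ρ̃_n(R) = ∫_R^∞ (-ρ̃_n'(r)) m(B_r(x)) dr`, and
Tonelli once more, now with `V(r) - V(R) = ∫_R^r S`, integrates by parts in `[0, ∞]`:
`∫_R^∞ (-ρ̃_n') V = ρ̃_n(R) V(R) + ∫_R^∞ S ρ̃_n`. Working in `[0, ∞]` removes every integrability
question; the convergence `∫_R^∞ S ρ̃_n → I(R)` passes to `[0, ∞]` as soon as `I(R) ≠ 0`, which
holds for large `R`.

(A) If `c V(r) ≤ m(B_r(x)) ≤ c' V(r)` for `r > R`, the two identities give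
`c I(R) ≤ liminf_n T_n(R) ≤ limsup_n T_n(R) ≤ c' I(R)`, because `ρ̃_n(R) → 0`; for every
`c < AVR < c'` this holds once `R` is large, and `I(R) → 1`.
(B) By Condition 3 (B), `ρ̃_n ≤ (ρ̃_n(R) / ρ̃_{n₀}(R)) ρ̃_{n₀}` on `(0, R]` for `n > n₀`, and the
factor tends to `0`.
(C) The bound `m(B_r) ≤ k V(r)` bounds `T_n(R)` uniformly in `x` for all large `n`, say `n ≥ N`;
by Condition 3 (B) again, each of the finitely many `ρ̃_n` with `n < N` is bounded on `[R, ∞)` by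
a multiple of `ρ̃_N`.
-/

theorem lintegral_mul_lintegral_Ioi {X : Type*} [MeasurableSpace X] (ν : Measure X) [SFinite ν]
    {φ : X → ℝ} (hφ : Measurable φ) {f : X → ℝ≥0∞} (hf : Measurable f)
    {h : ℝ → ℝ≥0∞} (hh : Measurable h) :
    ∫⁻ y, f y * (∫⁻ r in Ioi (φ y), h r) ∂ν = ∫⁻ r, h r * ∫⁻ y in {y | φ y < r}, f y ∂ν := by
  set F : X → ℝ → ℝ≥0∞ := fun y r =>
    {q : X × ℝ | φ q.1 < q.2}.indicator (fun q => f q.1 * h q.2) (y, r)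
  have hF : Measurable (Function.uncurry F) :=
    ((hf.comp measurable_fst).mul (hh.comp measurable_snd)).indicator
      (measurableSet_lt (hφ.comp measurable_fst) measurable_snd)
  calc ∫⁻ y, f y * (∫⁻ r in Ioi (φ y), h r) ∂ν = ∫⁻ y, (∫⁻ r, F y r) ∂ν := by
        refine lintegral_congr fun y => ?_
        rw [← lintegral_indicator measurableSet_Ioi,
          ← lintegral_const_mul _ (hh.indicator measurableSet_Ioi)]
        refine lintegral_congr fun r => ?_
        by_cases hr : φ y < r <;> simp [F, indicator_apply, hr]
    _ = ∫⁻ r, ∫⁻ y, F y r ∂ν := lintegral_lintegral_swap hF.aemeasurable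
    _ = ∫⁻ r, h r * ∫⁻ y in {y | φ y < r}, f y ∂ν := by
        refine lintegral_congr fun r => ?_
        have hFr : (fun y => F y r) = {y | φ y < r}.indicator (fun y => f y * h r) := by
          ext y; by_cases hr : φ y < r <;> simp [F, indicator_apply, hr]
        rw [hFr, lintegral_indicator (measurableSet_lt hφ measurable_const),
          lintegral_mul_const _ hf, mul_comm]

theorem tendsto_lintegral_ofReal_of_tendsto_integral {α ι : Type*} [MeasurableSpace α]
    {μ : Measure α} {l : Filter ι} {f : ι → α → ℝ} (hf : ∀ i, 0 ≤ᵐ[μ] f i) {L : ℝ} (hL : L ≠ 0)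
    (h : Tendsto (fun i => ∫ a, f i a ∂μ) l (𝓝 L)) :
    Tendsto (fun i => ∫⁻ a, ENNReal.ofReal (f i a) ∂μ) l (𝓝 (ENNReal.ofReal L)) := by
  refine (ENNReal.tendsto_ofReal h).congr' ?_
  filter_upwards [h.eventually_ne hL] with i hi
  -- a nonzero Bochner integral certifies integrability
  exact ofReal_integral_eq_lintegral_ofReal (not_not.1 fun hint => hi (integral_undef hint)) (hf i)

theorem tendsto_lintegral_lintegral_of_le_mul {X : Type*} [MeasurableSpace X] {μ : Measure X}
    {A B : X → Set X} (hA : ∀ x, MeasurableSet (A x)) (hAB : ∀ x, A x ⊆ B x)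
    {K : ℕ → X → X → ℝ≥0∞} {K₀ : X → X → ℝ≥0∞} {c : ℕ → ℝ≥0∞} (hc : Tendsto c atTop (𝓝 0))
    (hc_top : ∀ n, c n ≠ ⊤) (hK : ∀ᶠ n in atTop, ∀ x, ∀ y ∈ A x, K n x y ≤ c n * K₀ x y)
    (hK₀ : ∫⁻ x, ∫⁻ y in B x, K₀ x y ∂μ ∂μ ≠ ⊤) :
    Tendsto (fun n => ∫⁻ x, ∫⁻ y in A x, K n x y ∂μ ∂μ) atTop (𝓝 0) := by
  have hbound : Tendsto (fun n => c n * ∫⁻ x, ∫⁻ y in B x, K₀ x y ∂μ ∂μ) atTop (𝓝 0) := by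
    simpa using ENNReal.Tendsto.mul_const hc (Or.inr hK₀)
  refine tendsto_of_tendsto_of_tendsto_of_le_of_le' tendsto_const_nhds hbound
    (Eventually.of_forall fun n => zero_le) ?_
  filter_upwards [hK] with n hn
  rw [← lintegral_const_mul' _ _ (hc_top n)]
  refine lintegral_mono fun x => ?_
  rw [← lintegral_const_mul' _ _ (hc_top n)]
  exact (setLIntegral_mono' (hA x) (hn x)).trans (lintegral_mono_set (hAB x))

theorem tendsto_zero_of_mul_tendsto_zero {g V : ℝ → ℝ} (hg : ∀ r > 0, 0 ≤ g r)
    (hgV : Tendsto (fun r => g r * V r) atTop (𝓝 0)) (hV : Tendsto V atTop atTop) :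
    Tendsto g atTop (𝓝 0) := by
  refine tendsto_of_tendsto_of_tendsto_of_le_of_le' tendsto_const_nhds hgV ?_ ?_
  · filter_upwards [eventually_gt_atTop 0] with r hr using hg r hr
  · filter_upwards [hV.eventually_ge_atTop 1, eventually_gt_atTop 0] with r hV1 hr
    nlinarith [hg r hr]

theorem mul_le_mul_of_monotoneOn_div {f g : ℝ → ℝ} (hg : ∀ r > 0, 0 < g r)
    (hfg : MonotoneOn (fun r => f r / g r) (Ioi 0)) {s t : ℝ} (hs : 0 < s) (hst : s ≤ t) :
    f s * g t ≤ f t * g s := by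
  have h := hfg hs (hs.trans_le hst) hst
  rwa [div_le_div_iff₀ (hg s hs) (hg t (hs.trans_le hst))] at h

theorem MonotoneOn.deriv_nonneg_of_Ici {V : ℝ → ℝ} (hV : MonotoneOn V (Ici 0)) {r : ℝ}
    (hr : 0 < r) : 0 ≤ deriv V r := by
  rw [← derivWithin_of_isOpen isOpen_Ioi hr]
  exact (hV.mono Ioi_subset_Ici_self).derivWithin_nonneg

theorem lintegral_Ioo_deriv {V : ℝ → ℝ} (hV : MonotoneOn V (Ici 0))
    (hVC1 : ContDiffOn ℝ 1 V (Ici 0)) {a b : ℝ} (ha : 0 < a) (hab : a ≤ b) :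
    ∫⁻ s in Ioo a b, ENNReal.ofReal (deriv V s) = ENNReal.ofReal (V b - V a) := by
  have hsub : Icc a b ⊆ Ioi 0 := fun s hs => ha.trans_le hs.1
  have hcont : ContinuousOn (deriv V) (Icc a b) :=
    ((hVC1.mono Ioi_subset_Ici_self).continuousOn_deriv_of_isOpen isOpen_Ioi le_rfl).mono hsub
  have hderiv : ∀ s ∈ Ioo a b, HasDerivAt V (deriv V s) s := fun s hs =>
    ((hVC1.differentiableOn one_ne_zero).differentiableAt
      (Ici_mem_nhds (ha.trans hs.1))).hasDerivAt
  rw [← ofReal_integral_eq_lintegral_ofReal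
      ((hcont.integrableOn_Icc).mono_set Ioo_subset_Icc_self)
      ((ae_restrict_iff' measurableSet_Ioo).2 (ae_of_all _
        fun s hs => hV.deriv_nonneg_of_Ici (ha.trans hs.1))),
    ← integral_Ioc_eq_integral_Ioo, ← intervalIntegral.integral_of_le hab,
    intervalIntegral.integral_eq_sub_of_hasDerivAt_of_le hab
      (hVC1.continuousOn.mono (hsub.trans Ioi_subset_Ici_self)) hderiv
      (hcont.intervalIntegrable_of_Icc hab)]

structure IsRadialProfile (g : ℝ → ℝ) : Prop where
  contDiffOn : ContDiffOn ℝ 1 g (Ioi 0)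
  antitoneOn : AntitoneOn g (Ioi 0)
  tendsto_atTop : Tendsto g atTop (𝓝 0)

namespace IsRadialProfile

variable {g : ℝ → ℝ} (hg : IsRadialProfile g)
include hg

theorem hasDerivAt {r : ℝ} (hr : 0 < r) : HasDerivAt g (deriv g r) r :=
  ((hg.contDiffOn.differentiableOn one_ne_zero).differentiableAt
    (isOpen_Ioi.mem_nhds hr)).hasDerivAt

theorem deriv_nonpos {r : ℝ} (hr : 0 < r) : deriv g r ≤ 0 := by
  rw [← derivWithin_of_isOpen isOpen_Ioi hr]
  exact hg.antitoneOn.derivWithin_nonpos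

theorem lintegral_Ioi_neg_deriv {a : ℝ} (ha : 0 < a) :
    ∫⁻ r in Ioi a, ENNReal.ofReal (-deriv g r) = ENNReal.ofReal (g a) := by
  have hderiv : ∀ r ∈ Ioi a, HasDerivAt (fun r => -g r) (-deriv g r) r :=
    fun r hr => (hg.hasDerivAt (ha.trans hr)).neg
  have hcont : ContinuousWithinAt (fun r => -g r) (Ici a) a :=
    (hg.hasDerivAt ha).continuousAt.neg.continuousWithinAt
  have hnonneg : ∀ r ∈ Ioi a, 0 ≤ -deriv g r :=
    fun r hr => neg_nonneg.2 (hg.deriv_nonpos (ha.trans hr))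
  have hlim : Tendsto (fun r => -g r) atTop (𝓝 0) := by simpa using hg.tendsto_atTop.neg
  rw [← ofReal_integral_eq_lintegral_ofReal
      (integrableOn_Ioi_deriv_of_nonneg hcont hderiv hnonneg hlim)
      ((ae_restrict_iff' measurableSet_Ioi).2 (ae_of_all _ hnonneg)),
    integral_Ioi_of_hasDerivAt_of_nonneg hcont hderiv hnonneg hlim]
  simp

theorem lintegral_Ioi_neg_deriv_mul {V : ℝ → ℝ} (hV0 : 0 ≤ V 0) (hV : MonotoneOn V (Ici 0))
    (hVC1 : ContDiffOn ℝ 1 V (Ici 0)) {R : ℝ} (hR : 0 < R) :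
    ∫⁻ r in Ioi R, ENNReal.ofReal (-deriv g r) * ENNReal.ofReal (V r)
      = ENNReal.ofReal (g R) * ENNReal.ofReal (V R)
        + ∫⁻ s in Ioi R, ENNReal.ofReal (deriv V s * g s) := by
  have hVR : 0 ≤ V R := hV0.trans (hV self_mem_Ici hR.le hR.le)
  have hmeas : Measurable fun r => ENNReal.ofReal (-deriv g r) :=
    (measurable_deriv g).neg.ennreal_ofReal
  have hswap := lintegral_mul_lintegral_Ioi (volume.restrict (Ioi R)) (φ := fun s => s)
    measurable_id (measurable_deriv V).ennreal_ofReal hmeas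
  have hinner : ∀ s ∈ Ioi R,
      ENNReal.ofReal (deriv V s) * ∫⁻ r in Ioi s, ENNReal.ofReal (-deriv g r)
        = ENNReal.ofReal (deriv V s * g s) := fun s hs => by
    rw [hg.lintegral_Ioi_neg_deriv (hR.trans hs),
      ENNReal.ofReal_mul (hV.deriv_nonneg_of_Ici (hR.trans hs))]
  have hrestrict : ∀ r,
      (volume.restrict (Ioi R)).restrict {s | s < r} = volume.restrict (Ioo R r) :=
    fun r => by rw [Iio_def, Measure.restrict_restrict measurableSet_Iio, inter_comm]; rfl
  have hsupp : (Function.support fun r => ENNReal.ofReal (-deriv g r)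
      * ∫⁻ s in {s | s < r}, ENNReal.ofReal (deriv V s) ∂volume.restrict (Ioi R)) ⊆ Ioi R := by
    intro r hr
    by_contra hrR
    simp [hrestrict, Ioo_eq_empty (not_lt.2 (by simpa using hrR))] at hr
  calc ∫⁻ r in Ioi R, ENNReal.ofReal (-deriv g r) * ENNReal.ofReal (V r)
      = ∫⁻ r in Ioi R, (ENNReal.ofReal (V R) * ENNReal.ofReal (-deriv g r)
          + ENNReal.ofReal (-deriv g r) * ENNReal.ofReal (V r - V R)) := by
        refine setLIntegral_congr_fun measurableSet_Ioi fun r hr => ?_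
        rw [mul_comm (ENNReal.ofReal (V R)), ← mul_add, ← ENNReal.ofReal_add hVR
          (sub_nonneg.2 (hV (mem_Ici.2 hR.le) (mem_Ici.2 (hR.trans hr).le) (le_of_lt hr)))]
        ring_nf
    _ = ENNReal.ofReal (g R) * ENNReal.ofReal (V R) + ∫⁻ r in Ioi R, ENNReal.ofReal (-deriv g r)
          * ∫⁻ s in {s | s < r}, ENNReal.ofReal (deriv V s) ∂volume.restrict (Ioi R) := by
        rw [lintegral_add_left (hmeas.const_mul _), lintegral_const_mul _ hmeas,
          hg.lintegral_Ioi_neg_deriv hR, mul_comm]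
        refine congrArg _ (setLIntegral_congr_fun measurableSet_Ioi fun r hr => ?_)
        rw [hrestrict, lintegral_Ioo_deriv hV hVC1 hR (le_of_lt hr)]
    _ = ENNReal.ofReal (g R) * ENNReal.ofReal (V R)
        + ∫⁻ s in Ioi R, ENNReal.ofReal (deriv V s * g s) := by
        rw [setLIntegral_eq_of_support_subset hsupp, ← hswap,
          setLIntegral_congr_fun measurableSet_Ioi hinner]

end IsRadialProfile

section TailIntegral

variable {X : Type*} [MetricSpace X] [MeasurableSpace X] [OpensMeasurableSpace X]

noncomputable def tailIntegral (μ : Measure X) (g : ℝ → ℝ) (x : X) (R : ℝ) : ℝ≥0∞ :=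
  ∫⁻ y in {y | R ≤ dist x y}, ENNReal.ofReal (g (dist x y)) ∂μ

theorem tailIntegral_le_mul (μ : Measure X) (x : X) {R c : ℝ} (hc : 0 ≤ c) {g h : ℝ → ℝ}
    (hgh : ∀ d, R ≤ d → g d ≤ c * h d) :
    tailIntegral μ g x R ≤ ENNReal.ofReal c * tailIntegral μ h x R := by
  rw [tailIntegral, tailIntegral, ← lintegral_const_mul' _ _ ofReal_ne_top]
  refine setLIntegral_mono' (measurableSet_le measurable_const
    (continuous_const.dist continuous_id).measurable) fun y hy => ?_
  rw [← ENNReal.ofReal_mul hc]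
  exact ENNReal.ofReal_le_ofReal (hgh _ hy)

theorem IsRadialProfile.tailIntegral_add_measure_ball {g : ℝ → ℝ} (hg : IsRadialProfile g)
    (μ : Measure X) [SFinite μ] (x : X) {R : ℝ} (hR : 0 < R) :
    tailIntegral μ g x R + μ (ball x R) * ENNReal.ofReal (g R)
      = ∫⁻ r in Ioi R, ENNReal.ofReal (-deriv g r) * μ (ball x r) := by
  have hdist : Measurable (dist x) := (continuous_const.dist continuous_id).measurable
  have hS : MeasurableSet {y | R ≤ dist x y} := measurableSet_le measurable_const hdist
  have hmeas : Measurable fun r => ENNReal.ofReal (-deriv g r) :=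
    (measurable_deriv g).neg.ennreal_ofReal
  have hswap := lintegral_mul_lintegral_Ioi μ (φ := fun y => max R (dist x y))
    (measurable_const.max hdist) measurable_one hmeas
  simp only [Pi.one_apply, one_mul, setLIntegral_one] at hswap
  have hlevel : ∀ r,
      μ {y | max R (dist x y) < r} = (Ioi R).indicator (fun r => μ (ball x r)) r := by
    intro r
    by_cases hr : R < r
    · simp [hr, ball, dist_comm]
    · simp [hr]
  have hcompl : {y | R ≤ dist x y}ᶜ = ball x R := by ext; simp [dist_comm]
  calc tailIntegral μ g x R + μ (ball x R) * ENNReal.ofReal (g R)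
      = ∫⁻ y, ENNReal.ofReal (g (max R (dist x y))) ∂μ := by
        rw [← lintegral_add_compl _ hS, tailIntegral, hcompl, mul_comm, ← setLIntegral_const]
        congr 1
        · exact setLIntegral_congr_fun hS fun y hy => by rw [max_eq_right hy]
        · exact setLIntegral_congr_fun measurableSet_ball fun y hy => by
            rw [max_eq_left (by rw [mem_ball, dist_comm] at hy; exact hy.le)]
    _ = ∫⁻ r, ENNReal.ofReal (-deriv g r) * μ {y | max R (dist x y) < r} := by
        rw [← hswap]
        exact lintegral_congr fun y =>
          (hg.lintegral_Ioi_neg_deriv (hR.trans_le (le_max_left _ _))).symm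
    _ = ∫⁻ r in Ioi R, ENNReal.ofReal (-deriv g r) * μ (ball x r) := by
        rw [← lintegral_indicator measurableSet_Ioi]
        exact lintegral_congr fun r => by rw [hlevel, indicator_mul_right]

variable {V g : ℝ → ℝ} (hg : IsRadialProfile g) (hV0 : 0 ≤ V 0) (hV : MonotoneOn V (Ici 0))
  (hVC1 : ContDiffOn ℝ 1 V (Ici 0)) (μ : Measure X) [SFinite μ] (x : X) {R : ℝ} (hR : 0 < R)
include hg hV0 hV hVC1 hR

theorem IsRadialProfile.tailIntegral_le {c : ℝ≥0∞}
    (hball : ∀ r > R, μ (ball x r) ≤ c * ENNReal.ofReal (V r)) :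
    tailIntegral μ g x R ≤ c * (ENNReal.ofReal (g R) * ENNReal.ofReal (V R)
      + ∫⁻ s in Ioi R, ENNReal.ofReal (deriv V s * g s)) := by
  have hmeas : AEMeasurable (fun r => ENNReal.ofReal (-deriv g r) * ENNReal.ofReal (V r))
      (volume.restrict (Ioi R)) :=
    (measurable_deriv g).neg.ennreal_ofReal.aemeasurable.mul
      ((hVC1.continuousOn.mono fun r hr => mem_Ici.2 (hR.trans hr).le).aemeasurable
        measurableSet_Ioi).ennreal_ofReal
  rw [← hg.lintegral_Ioi_neg_deriv_mul hV0 hV hVC1 hR, ← lintegral_const_mul'' _ hmeas]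
  calc tailIntegral μ g x R
      ≤ tailIntegral μ g x R + μ (ball x R) * ENNReal.ofReal (g R) := le_self_add
    _ = ∫⁻ r in Ioi R, ENNReal.ofReal (-deriv g r) * μ (ball x r) :=
        hg.tailIntegral_add_measure_ball μ x hR
    _ ≤ ∫⁻ r in Ioi R, c * (ENNReal.ofReal (-deriv g r) * ENNReal.ofReal (V r)) :=
        setLIntegral_mono' measurableSet_Ioi fun r hr => by
          rw [mul_left_comm]; exact mul_le_mul_right (hball r hr) _

theorem IsRadialProfile.le_tailIntegral_add {c : ℝ≥0∞}
    (hball : ∀ r > R, c * ENNReal.ofReal (V r) ≤ μ (ball x r)) :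
    c * ∫⁻ s in Ioi R, ENNReal.ofReal (deriv V s * g s)
      ≤ tailIntegral μ g x R + μ (ball x R) * ENNReal.ofReal (g R) := by
  calc c * ∫⁻ s in Ioi R, ENNReal.ofReal (deriv V s * g s)
      ≤ c * (ENNReal.ofReal (g R) * ENNReal.ofReal (V R)
        + ∫⁻ s in Ioi R, ENNReal.ofReal (deriv V s * g s)) := mul_le_mul_right le_add_self _
    _ ≤ ∫⁻ r in Ioi R, c * (ENNReal.ofReal (-deriv g r) * ENNReal.ofReal (V r)) := by
        rw [← hg.lintegral_Ioi_neg_deriv_mul hV0 hV hVC1 hR]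
        exact lintegral_const_mul_le _ _
    _ ≤ ∫⁻ r in Ioi R, ENNReal.ofReal (-deriv g r) * μ (ball x r) :=
        setLIntegral_mono' measurableSet_Ioi fun r hr => by
          rw [mul_left_comm]; exact mul_le_mul_right (hball r hr) _
    _ = tailIntegral μ g x R + μ (ball x R) * ENNReal.ofReal (g R) :=
        (hg.tailIntegral_add_measure_ball μ x hR).symm

end TailIntegral

section RadialMollifiers

variable {X : Type*} [MetricSpace X] [MeasurableSpace X] [OpensMeasurableSpace X] {μ : Measure X}
  [SFinite μ] {V : ℝ → ℝ} {ρ : ℕ → ℝ → ℝ} (hρ : ∀ n, IsRadialProfile (ρ n)) (hV0 : 0 ≤ V 0)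
  (hV : MonotoneOn V (Ici 0)) (hVC1 : ContDiffOn ℝ 1 V (Ici 0))

include hρ hV0 hV hVC1

theorem limsup_tailIntegral_le {x : X} {R : ℝ} (hR : 0 < R) {L : ℝ≥0∞}
    (hJ : Tendsto (fun n => ∫⁻ s in Ioi R, ENNReal.ofReal (deriv V s * ρ n s)) atTop (𝓝 L))
    (hρR : Tendsto (fun n => ρ n R) atTop (𝓝 0))
    {c : ℝ≥0∞} (hc : c ≠ ⊤) (hball : ∀ r > R, μ (ball x r) ≤ c * ENNReal.ofReal (V r)) :
    limsup (fun n => tailIntegral μ (ρ n) x R) atTop ≤ c * L := by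
  have hbound : Tendsto (fun n => c * (ENNReal.ofReal (ρ n R) * ENNReal.ofReal (V R)
      + ∫⁻ s in Ioi R, ENNReal.ofReal (deriv V s * ρ n s))) atTop (𝓝 (c * L)) := by
    simpa using ENNReal.Tendsto.const_mul ((ENNReal.Tendsto.mul_const
      (ENNReal.tendsto_ofReal hρR) (Or.inr ofReal_ne_top)).add hJ) (Or.inr hc)
  rw [← hbound.limsup_eq]
  exact limsup_le_limsup (Eventually.of_forall fun n =>
    (hρ n).tailIntegral_le hV0 hV hVC1 μ x hR hball)

theorem le_liminf_tailIntegral {x : X} {R : ℝ} (hR : 0 < R) {L : ℝ≥0∞}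
    (hJ : Tendsto (fun n => ∫⁻ s in Ioi R, ENNReal.ofReal (deriv V s * ρ n s)) atTop (𝓝 L))
    (hρR : Tendsto (fun n => ρ n R) atTop (𝓝 0))
    (hfin : μ (ball x R) ≠ ⊤) {c : ℝ≥0∞} (hc : c ≠ ⊤)
    (hball : ∀ r > R, c * ENNReal.ofReal (V r) ≤ μ (ball x r)) :
    c * L ≤ liminf (fun n => tailIntegral μ (ρ n) x R) atTop := by
  have hbound : Tendsto (fun n => c * (∫⁻ s in Ioi R, ENNReal.ofReal (deriv V s * ρ n s))
      - μ (ball x R) * ENNReal.ofReal (ρ n R)) atTop (𝓝 (c * L)) := by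
    simpa using ENNReal.Tendsto.sub (ENNReal.Tendsto.const_mul hJ (Or.inr hc))
      (ENNReal.Tendsto.const_mul (ENNReal.tendsto_ofReal hρR) (Or.inr hfin)) (Or.inr (by simp))
  rw [← hbound.liminf_eq]
  exact liminf_le_liminf (Eventually.of_forall fun n =>
    tsub_le_iff_right.2 ((hρ n).le_tailIntegral_add hV0 hV hVC1 μ x hR hball))

theorem exists_forall_tailIntegral_le (hρ_pos : ∀ n, ∀ r > 0, 0 < ρ n r)
    (hρ_ratio : ∀ i j : ℕ, i < j → MonotoneOn (fun r => ρ j r / ρ i r) (Ioi 0))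
    {R : ℝ} (hR : 0 < R) {L : ℝ≥0∞}
    (hJ : Tendsto (fun n => ∫⁻ s in Ioi R, ENNReal.ofReal (deriv V s * ρ n s)) atTop (𝓝 L))
    (hL : L ≠ ⊤)
    (hρR : Tendsto (fun n => ρ n R) atTop (𝓝 0)) {c : ℝ≥0∞} (hc : c ≠ ⊤)
    (hball : ∀ x : X, ∀ r > R, μ (ball x r) ≤ c * ENNReal.ofReal (V r)) :
    ∃ C < ⊤, ∀ x n, tailIntegral μ (ρ n) x R ≤ C := by
  have hbound : Tendsto (fun n => ENNReal.ofReal (ρ n R) * ENNReal.ofReal (V R)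
      + ∫⁻ s in Ioi R, ENNReal.ofReal (deriv V s * ρ n s)) atTop (𝓝 L) := by
    simpa using (ENNReal.Tendsto.mul_const (ENNReal.tendsto_ofReal hρR)
      (Or.inr ofReal_ne_top)).add hJ
  obtain ⟨N, hN⟩ := eventually_atTop.1
    (hbound.eventually (gt_mem_nhds (ENNReal.lt_add_right hL one_ne_zero)))
  set M := c * (L + 1)
  set S := ∑ m ∈ Finset.range N, ENNReal.ofReal (ρ m R / ρ N R)
  have htail : ∀ x, ∀ n ≥ N, tailIntegral μ (ρ n) x R ≤ M := fun x n hn =>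
    ((hρ n).tailIntegral_le hV0 hV hVC1 μ x hR (hball x)).trans
      (mul_le_mul_right (hN n hn).le _)
  refine ⟨M * (1 + S), ENNReal.mul_lt_top (ENNReal.mul_lt_top hc.lt_top (by simpa using hL.lt_top))
      (by simp [S, ENNReal.sum_lt_top]), fun x n => ?_⟩
  rcases le_or_gt N n with hn | hn
  · exact (htail x n hn).trans (le_mul_of_one_le_right' le_self_add)
  · have hdom : ∀ d, R ≤ d → ρ n d ≤ ρ n R / ρ N R * ρ N d := fun d hd => by
      have h := mul_le_mul_of_monotoneOn_div (hρ_pos n) (hρ_ratio n N hn) hR hd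
      rw [div_mul_eq_mul_div, le_div_iff₀ (hρ_pos N R hR)]
      linarith
    calc tailIntegral μ (ρ n) x R
        ≤ ENNReal.ofReal (ρ n R / ρ N R) * tailIntegral μ (ρ N) x R :=
          tailIntegral_le_mul μ x (div_nonneg (hρ_pos n R hR).le (hρ_pos N R hR).le) hdom
      _ ≤ S * M :=
          mul_le_mul' (Finset.single_le_sum (f := fun m => ENNReal.ofReal (ρ m R / ρ N R))
            (fun m _ => zero_le) (Finset.mem_range.2 hn)) (htail x N le_rfl)
      _ ≤ M * (1 + S) := by rw [mul_comm]; exact mul_le_mul_right le_add_self _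

variable {I : ℝ → ℝ} (hI_one : Tendsto I atTop (𝓝 1))
  (hJ : ∀ᶠ R in atTop, 0 < R ∧ Tendsto (fun n => ∫⁻ s in Ioi R,
    ENNReal.ofReal (deriv V s * ρ n s)) atTop (𝓝 (ENNReal.ofReal (I R))))
  (hρ_lim : ∀ r > 0, Tendsto (fun n => ρ n r) atTop (𝓝 0)) {x : X} {L : ℝ≥0∞}
  (hL : Tendsto (fun r => μ (ball x r) / ENNReal.ofReal (V r)) atTop (𝓝 L))
include hI_one hJ hρ_lim hL

theorem eventually_limsup_tailIntegral_lt {b : ℝ≥0∞} (hb : L < b) :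
    ∀ᶠ R in atTop, limsup (fun n => tailIntegral μ (ρ n) x R) atTop < b := by
  obtain ⟨c, hLc, hcb⟩ := exists_between hb
  have hball : ∀ᶠ R in atTop, ∀ r > R, μ (ball x r) ≤ c * ENNReal.ofReal (V r) := by
    filter_upwards [eventually_forall_ge_atTop.2 (hL.eventually (gt_mem_nhds hLc))]
      with R hR r hr
    exact (ENNReal.div_le_iff_le_mul (Or.inr hcb.ne_top) (Or.inl ofReal_ne_top)).1 (hR r hr.le).le
  have hcI : Tendsto (fun R => c * ENNReal.ofReal (I R)) atTop (𝓝 c) := by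
    simpa using ENNReal.Tendsto.const_mul (ENNReal.tendsto_ofReal hI_one) (Or.inl (by simp))
  filter_upwards [hJ, hball, hcI.eventually (gt_mem_nhds hcb)] with R ⟨hR, hJR⟩ hballR hlt
  exact (limsup_tailIntegral_le hρ hV0 hV hVC1 hR hJR (hρ_lim R hR) hcb.ne_top hballR).trans_lt
    hlt

theorem eventually_lt_liminf_tailIntegral (hfin : ∀ᶠ R in atTop, μ (ball x R) ≠ ⊤)
    {a : ℝ≥0∞} (ha : a < L) :
    ∀ᶠ R in atTop, a < liminf (fun n => tailIntegral μ (ρ n) x R) atTop := by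
  obtain ⟨c, hac, hcL⟩ := exists_between ha
  have hball : ∀ᶠ R in atTop, ∀ r > R, c * ENNReal.ofReal (V r) ≤ μ (ball x r) := by
    filter_upwards [eventually_forall_ge_atTop.2 (hL.eventually (lt_mem_nhds hcL))]
      with R hR r hr
    exact ((ENNReal.lt_div_iff_mul_lt (Or.inr hcL.ne_top) (Or.inl ofReal_ne_top)).1
      (hR r hr.le)).le
  have hcI : Tendsto (fun R => c * ENNReal.ofReal (I R)) atTop (𝓝 c) := by
    simpa using ENNReal.Tendsto.const_mul (ENNReal.tendsto_ofReal hI_one) (Or.inl (by simp))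
  filter_upwards [hJ, hball, hfin, hcI.eventually (lt_mem_nhds hac)]
    with R ⟨hR, hJR⟩ hballR hfinR hlt
  exact hlt.trans_le
    (le_liminf_tailIntegral hρ hV0 hV hVC1 hR hJR (hρ_lim R hR) hfinR hcL.ne_top hballR)

theorem tendsto_limsup_liminf_tailIntegral (hfin : ∀ᶠ R in atTop, μ (ball x R) ≠ ⊤) :
    Tendsto (fun R => limsup (fun n => tailIntegral μ (ρ n) x R) atTop) atTop (𝓝 L) ∧
      Tendsto (fun R => liminf (fun n => tailIntegral μ (ρ n) x R) atTop) atTop (𝓝 L) := by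
  have hlow := fun a (ha : a < L) =>
    eventually_lt_liminf_tailIntegral hρ hV0 hV hVC1 hI_one hJ hρ_lim hL hfin ha
  have hup := fun b (hb : L < b) =>
    eventually_limsup_tailIntegral_lt hρ hV0 hV hVC1 hI_one hJ hρ_lim hL hb
  exact ⟨tendsto_order.2 ⟨fun a ha => (hlow a ha).mono fun R h => h.trans_le liminf_le_limsup,
      hup⟩,
    tendsto_order.2 ⟨hlow, fun b hb => (hup b hb).mono fun R h => (liminf_le_limsup).trans_lt h⟩⟩

end RadialMollifiers

theorem eventually_tendsto_lintegral_deriv_mul {V : ℝ → ℝ} {ρ : ℕ → ℝ → ℝ}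
    (hρ_nonneg : ∀ n, ∀ r > 0, 0 ≤ ρ n r) (hV : MonotoneOn V (Ici 0)) {I : ℝ → ℝ}
    (hI : ∀ R > 0, Tendsto (fun n => ∫ r in Ioi R, deriv V r * ρ n r) atTop (𝓝 (I R)))
    (hI_one : Tendsto I atTop (𝓝 1)) :
    ∀ᶠ R in atTop, 0 < R ∧ Tendsto (fun n => ∫⁻ s in Ioi R, ENNReal.ofReal (deriv V s * ρ n s))
      atTop (𝓝 (ENNReal.ofReal (I R))) := by
  filter_upwards [eventually_gt_atTop 0, hI_one.eventually_ne one_ne_zero] with R hR hIR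
  refine ⟨hR, tendsto_lintegral_ofReal_of_tendsto_integral (fun n => ?_) hIR (hI R hR)⟩
  exact (ae_restrict_iff' measurableSet_Ioi).2 (ae_of_all _ fun s hs =>
    mul_nonneg (hV.deriv_nonneg_of_Ici (hR.trans hs)) (hρ_nonneg n s (hR.trans hs)))

theorem tendsto_lintegral_lintegral_ball_sub_diagonal {X : Type*} [MetricSpace X]
    [MeasurableSpace X] [OpensMeasurableSpace X] {μ : Measure X} {ρ : ℕ → ℝ → ℝ}
    (hρ_pos : ∀ n, ∀ r > 0, 0 < ρ n r)
    (hρ_ratio : ∀ i j : ℕ, i < j → MonotoneOn (fun r => ρ j r / ρ i r) (Ioi 0))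
    {p : ℝ} {u : X → ℝ} {n₀ : ℕ}
    (hE : energy μ p (fun x y => ENNReal.ofReal (ρ n₀ (dist x y))) u ≠ ⊤)
    {R : ℝ} (hR : 0 < R) (hρR : Tendsto (fun n => ρ n R) atTop (𝓝 0)) :
    Tendsto (fun n => ∫⁻ x, ∫⁻ y in {y | 0 < dist x y ∧ dist x y < R},
      ENNReal.ofReal (|u x - u y| ^ p) * ENNReal.ofReal (ρ n (dist x y)) ∂μ ∂μ) atTop (𝓝 0) := by
  have hdist : ∀ x : X, Measurable (dist x) :=
    fun x => (continuous_const.dist continuous_id).measurable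
  refine tendsto_lintegral_lintegral_of_le_mul
    (fun x => (measurableSet_lt measurable_const (hdist x)).inter
      (measurableSet_lt (hdist x) measurable_const))
    (B := fun x => {y | y ≠ x})
    (fun x y hy hyx => (show 0 < dist x y from hy.1).ne' (by rw [hyx, dist_self]))
    (c := fun n => ENNReal.ofReal (ρ n R / ρ n₀ R))
    (by simpa using ENNReal.tendsto_ofReal (hρR.div_const (ρ n₀ R))) (fun _ => ofReal_ne_top)
    ?_ hE
  filter_upwards [eventually_gt_atTop n₀] with n hn x y hy
  have h := mul_le_mul_of_monotoneOn_div (hρ_pos n₀) (hρ_ratio n₀ n hn) hy.1 hy.2.le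
  rw [mul_left_comm, ← ENNReal.ofReal_mul (div_nonneg (hρ_pos n R hR).le (hρ_pos n₀ R hR).le)]
  refine mul_le_mul_right (ENNReal.ofReal_le_ofReal ?_) _
  rw [div_mul_eq_mul_div, le_div_iff₀ (hρ_pos n₀ R hR)]
  linarith

theorem radial_mollifiers_satisfy_assumption1_general
    {X : Type*} [MetricSpace X] [TopologicalSpace.SeparableSpace X]
    [MeasurableSpace X] [BorelSpace X]
    (μ : Measure X) [IsLocallyFiniteMeasure μ]
    (p : ℝ)
    -- `V` is a `C¹` strictly increasing function on `[0,∞)` with `V(t) → ∞`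
    (V : ℝ → ℝ) (hV0 : 0 ≤ V 0) (hVmono : StrictMonoOn V (Set.Ici 0))
    (hVC1 : ContDiffOn ℝ 1 V (Set.Ici 0)) (hVtop : Tendsto V atTop atTop)
    -- generalized asymptotic volume ratio associated to `V`
    (AVR : ℝ≥0∞)
    (hAVR : ∀ x₀ : X, Tendsto (fun r : ℝ => μ (ball x₀ r) / ENNReal.ofReal (V r))
      atTop (nhds AVR))
    -- volume upper bound `m(B_r(x)) ≤ k V(r)` for all large `r`
    (k : ℝ)
    (hvol : ∃ R₁ : ℝ, ∀ (x : X), ∀ r ≥ R₁, μ (ball x r) ≤ ENNReal.ofReal (k * V r))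
    -- Condition 3: mollifiers of radial type, approximation of the identity associated to `V`
    (ρt : ℕ → ℝ → ℝ)
    (hρ_nonneg : ∀ (n : ℕ), ∀ r > (0:ℝ), 0 ≤ ρt n r)
    (hρ_anti : ∀ n, StrictAntiOn (ρt n) (Set.Ioi 0))
    (hρ_C1 : ∀ n, ContDiffOn ℝ 1 (ρt n) (Set.Ioi 0))
    -- Condition 3 (A)
    (hρ_lim : ∀ r > (0:ℝ), Tendsto (fun n => ρt n r) atTop (nhds 0))
    (hρ_V : ∀ n, Tendsto (fun r => ρt n r * V r) atTop (nhds 0))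
    -- Condition 3 (B)
    (hρ_ratio : ∀ i j : ℕ, i < j → MonotoneOn (fun r => ρt j r / ρt i r) (Set.Ioi 0))
    -- Condition 3 (C): `lim_{R→∞} lim_{n→∞} ∫_R^∞ S(r) ρ̃_n(r) dr = 1`
    (I : ℝ → ℝ)
    (hI : ∀ R > (0:ℝ), Tendsto (fun n => ∫ r in Set.Ioi R, deriv V r * ρt n r) atTop (nhds (I R)))
    (hI_one : Tendsto I atTop (nhds 1)) :
    -- Assumption 1 (A) with L = AVR
    (∀ x : X,
      Tendsto (fun R : ℝ =>
          limsup (fun n =>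
            ∫⁻ y in {y | R ≤ dist x y}, ENNReal.ofReal (ρt n (dist x y)) ∂μ) atTop)
        atTop (nhds AVR) ∧
      Tendsto (fun R : ℝ =>
          liminf (fun n =>
            ∫⁻ y in {y | R ≤ dist x y}, ENNReal.ofReal (ρt n (dist x y)) ∂μ) atTop)
        atTop (nhds AVR)) ∧
    -- Assumption 1 (B)
    (∀ u : X → ℝ, MemLp u (ENNReal.ofReal p) μ →
      (∃ n₀ : ℕ, energy μ p (fun x y => ENNReal.ofReal (ρt n₀ (dist x y))) u < ⊤) →
      ∀ R : ℝ, 0 < R →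
        Tendsto (fun n => ∫⁻ x, ∫⁻ y in {y | 0 < dist x y ∧ dist x y < R},
            ENNReal.ofReal (|u x - u y| ^ p) * ENNReal.ofReal (ρt n (dist x y)) ∂μ ∂μ)
          atTop (nhds 0)) ∧
    -- Assumption 1 (C)
    (∀ᶠ R : ℝ in atTop, ∃ C : ℝ≥0∞, C < ⊤ ∧
      ∀ (x : X) (n : ℕ),
        ∫⁻ y in {y | R ≤ dist x y}, ENNReal.ofReal (ρt n (dist x y)) ∂μ ≤ C) := by
  obtain ⟨R₁, hvol⟩ := hvol
  have hV := hVmono.monotoneOn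
  have hρ : ∀ n, IsRadialProfile (ρt n) := fun n => ⟨hρ_C1 n, (hρ_anti n).antitoneOn,
    tendsto_zero_of_mul_tendsto_zero (hρ_nonneg n) (hρ_V n) hVtop⟩
  have hρ_pos : ∀ n, ∀ r > (0:ℝ), 0 < ρt n r := fun n r hr =>
    (hρ_nonneg n (r + 1) (by linarith)).trans_lt (hρ_anti n hr (by simp; linarith) (lt_add_one r))
  have hJ := eventually_tendsto_lintegral_deriv_mul hρ_nonneg hV hI hI_one
  have hball : ∀ x, ∀ r > max R₁ 0, μ (ball x r) ≤ ENNReal.ofReal k * ENNReal.ofReal (V r) := by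
    intro x r hr
    have hr0 : 0 ≤ r := (le_max_right _ _).trans hr.le
    rw [← ENNReal.ofReal_mul' (hV0.trans (hV self_mem_Ici hr0 hr0))]
    exact hvol x r ((le_max_left _ _).trans hr.le)
  refine ⟨fun x => tendsto_limsup_liminf_tailIntegral hρ hV0 hV hVC1 hI_one hJ hρ_lim (hAVR x) ?_,
    fun u _ ⟨n₀, hE⟩ R hR =>
      tendsto_lintegral_lintegral_ball_sub_diagonal hρ_pos hρ_ratio hE.ne hR (hρ_lim R hR), ?_⟩
  · filter_upwards [eventually_ge_atTop R₁] with R hR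
    exact ne_top_of_le_ne_top ofReal_ne_top (hvol x R hR)
  · filter_upwards [hJ, eventually_gt_atTop (max R₁ 0)] with R ⟨hR, hJR⟩ hR₁
    exact exists_forall_tailIntegral_le hρ hV0 hV hVC1 hρ_pos hρ_ratio hR hJR ofReal_ne_top
      (hρ_lim R hR) ofReal_ne_top fun x r hr => hball x r (hR₁.trans hr)

/-- Lemma 2.11: if a metric measure space admits the generalized asymptotic volume ratio
associated to `V` and its balls satisfy `m(B_r(x)) ≤ k V(r)` for all large `r`, then radial
mollifiers satisfying Condition 3 satisfy Assumption 1 with `L = AVR^V`. -/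
theorem radial_mollifiers_satisfy_assumption1
    {X : Type*} [MetricSpace X] [CompleteSpace X] [TopologicalSpace.SeparableSpace X]
    [MeasurableSpace X] [BorelSpace X]
    (μ : Measure X) [IsLocallyFiniteMeasure μ] [μ.IsOpenPosMeasure]
    (p : ℝ) (hp : 1 ≤ p)
    -- `V` is a `C¹` strictly increasing function on `[0,∞)` with `V(t) → ∞`
    (V : ℝ → ℝ) (hV0 : 0 ≤ V 0) (hVmono : StrictMonoOn V (Set.Ici 0))
    (hVC1 : ContDiffOn ℝ 1 V (Set.Ici 0)) (hVtop : Tendsto V atTop atTop)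
    -- generalized asymptotic volume ratio associated to `V`
    (AVR : ℝ≥0∞)
    (hAVR : ∀ x₀ : X, Tendsto (fun r : ℝ => μ (ball x₀ r) / ENNReal.ofReal (V r))
      atTop (nhds AVR))
    -- volume upper bound `m(B_r(x)) ≤ k V(r)` for all large `r`
    (k : ℝ) (hk : 0 < k)
    (hvol : ∃ R₁ : ℝ, ∀ (x : X), ∀ r ≥ R₁, μ (ball x r) ≤ ENNReal.ofReal (k * V r))
    -- Condition 3: mollifiers of radial type, approximation of the identity associated to `V`
    (ρt : ℕ → ℝ → ℝ)
    (hρ_nonneg : ∀ (n : ℕ), ∀ r > (0:ℝ), 0 ≤ ρt n r)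
    (hρ_anti : ∀ n, StrictAntiOn (ρt n) (Set.Ioi 0))
    (hρ_C1 : ∀ n, ContDiffOn ℝ 1 (ρt n) (Set.Ioi 0))
    -- Condition 3 (A)
    (hρ_lim : ∀ r > (0:ℝ), Tendsto (fun n => ρt n r) atTop (nhds 0))
    (hρ_V : ∀ n, Tendsto (fun r => ρt n r * V r) atTop (nhds 0))
    -- Condition 3 (B)
    (hρ_ratio : ∀ i j : ℕ, i < j → MonotoneOn (fun r => ρt j r / ρt i r) (Set.Ioi 0))
    -- Condition 3 (C): `lim_{R→∞} lim_{n→∞} ∫_R^∞ S(r) ρ̃_n(r) dr = 1`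
    (I : ℝ → ℝ)
    (hI : ∀ R > (0:ℝ), Tendsto (fun n => ∫ r in Set.Ioi R, deriv V r * ρt n r) atTop (nhds (I R)))
    (hI_one : Tendsto I atTop (nhds 1)) :
    -- Assumption 1 (A) with L = AVR
    (∀ x : X,
      Tendsto (fun R : ℝ =>
          limsup (fun n =>
            ∫⁻ y in {y | R ≤ dist x y}, ENNReal.ofReal (ρt n (dist x y)) ∂μ) atTop)
        atTop (nhds AVR) ∧
      Tendsto (fun R : ℝ =>
          liminf (fun n =>
            ∫⁻ y in {y | R ≤ dist x y}, ENNReal.ofReal (ρt n (dist x y)) ∂μ) atTop)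
        atTop (nhds AVR)) ∧
    -- Assumption 1 (B)
    (∀ u : X → ℝ, MemLp u (ENNReal.ofReal p) μ →
      (∃ n₀ : ℕ, energy μ p (fun x y => ENNReal.ofReal (ρt n₀ (dist x y))) u < ⊤) →
      ∀ R : ℝ, 0 < R →
        Tendsto (fun n => ∫⁻ x, ∫⁻ y in {y | 0 < dist x y ∧ dist x y < R},
            ENNReal.ofReal (|u x - u y| ^ p) * ENNReal.ofReal (ρt n (dist x y)) ∂μ ∂μ)
          atTop (nhds 0)) ∧
    -- Assumption 1 (C)
    (∀ᶠ R : ℝ in atTop, ∃ C : ℝ≥0∞, C < ⊤ ∧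
      ∀ (x : X) (n : ℕ),
        ∫⁻ y in {y | R ≤ dist x y}, ENNReal.ofReal (ρt n (dist x y)) ∂μ ≤ C) :=
  radial_mollifiers_satisfy_assumption1_general μ p V hV0 hVmono hVC1 hVtop AVR hAVR k hvol ρt
    hρ_nonneg hρ_anti hρ_C1 hρ_lim hρ_V hρ_ratio I hI hI_one
end

section
/- Let V : [0,∞) → [0,∞) be a C¹ strictly increasing function with V(t) → ∞ as t → ∞. Let (a_n)_{n∈ℕ} be a strictly decreasing sequence of positive reals converging to 0, and let f : (0,∞) → ℝ be a positive increasing C² function satisfying: (i) lim_{s→∞} f(s) = ∞; (ii) lim_{s→∞} s f'(s)/f(s)^r = 0 for every r > 1; (iii) s ↦ f'(s)/f(s)^r is strictly decreasing for every r > 1. Then the functions ρ̃_n(t) := a_n f'(V(t)) / f(V(t))^{a_n+1} on (0,∞) satisfy Condition 3 (approximation of the identity of radial type associated to V): each ρ̃_n is C¹ and strictly decreasing, lim_{n→∞} ρ̃_n(r) = 0 for every r > 0, lim_{r→∞} ρ̃_n(r) V(r) = 0 for every n, the map r ↦ ρ̃_n(r)/ρ̃_m(r) is non-decreasing whenever n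 > m, and lim_{R→∞} lim_{n→∞} ∫_R^∞ V'(r) ρ̃_n(r) dr = 1. -/
open MeasureTheory Filter Topology Set

/-!
With `g = f ∘ V`, the mollifier `ρ̃_α = α f'(V) / f(V)^(α+1)` satisfies `V' ρ̃_α = α g' / g^(α+1)`,
which is the derivative of `-g^(-α)`. Since `g → ∞`, this gives
`∫_R^∞ V' ρ̃_α = f(V R)^(-α)`, which tends to `1` as `α → 0`, already for every fixed `R`.
The ratio `ρ̃_β / ρ̃_α = (β / α) f(V)^(α - β)` is non-decreasing for `β < α` because `f ∘ V` is,
and the remaining properties are read off the hypotheses on `f'/f^r` with `r = α + 1`.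
-/

lemma MonotoneOn.deriv_nonneg_of_isOpen {g : ℝ → ℝ} {s : Set ℝ} {x : ℝ} (hg : MonotoneOn g s)
    (hs : IsOpen s) (hx : x ∈ s) : 0 ≤ deriv g x := by
  rw [← derivWithin_of_isOpen hs hx]
  exact hg.derivWithin_nonneg

lemma deriv_pos_of_strictAntiOn_deriv_div_rpow {f : ℝ → ℝ} {r s : ℝ} (hs : 0 < s)
    (hf_pos : ∀ s > (0:ℝ), 0 < f s) (hf_mono : MonotoneOn f (Ioi 0))
    (hf_anti : StrictAntiOn (fun s => deriv f s / f s ^ r) (Ioi 0)) : 0 < deriv f s := by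
  have hs1 : s + 1 ∈ Ioi (0:ℝ) := mem_Ioi.mpr (by linarith)
  have h_next : 0 ≤ deriv f (s + 1) / f (s + 1) ^ r :=
    div_nonneg (hf_mono.deriv_nonneg_of_isOpen isOpen_Ioi hs1)
      (Real.rpow_nonneg (hf_pos _ hs1).le _)
  have h_ratio_pos := h_next.trans_lt (hf_anti hs hs1 (lt_add_one s))
  exact (div_pos_iff_of_pos_right (Real.rpow_pos_of_pos (hf_pos s hs) r)).mp h_ratio_pos

lemma div_rpow_add_one_div_div_rpow_add_one {x d α β : ℝ} (hx : 0 < x) (hd : d ≠ 0)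
    (hα : α ≠ 0) :
    (β * d / x ^ (β + 1)) / (α * d / x ^ (α + 1)) = β / α * x ^ (α - β) := by
  have h_split : x ^ (α + 1) = x ^ (α - β) * x ^ (β + 1) := by
    rw [← Real.rpow_add hx]; ring_nf
  have := (Real.rpow_pos_of_pos hx (β + 1)).ne'
  rw [h_split]
  field_simp

lemma integral_Ioi_mul_deriv_div_rpow_add_one {g g' : ℝ → ℝ} {R α : ℝ} (hα : 0 < α)
    (hg : ∀ t ∈ Ici R, HasDerivAt g (g' t) t) (hg_pos : ∀ t ∈ Ici R, 0 < g t)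
    (hg' : ∀ t ∈ Ioi R, 0 ≤ g' t) (hg_top : Tendsto g atTop atTop) :
    ∫ t in Ioi R, α * g' t / g t ^ (α + 1) = g R ^ (-α) := by
  have h_antideriv : ∀ t ∈ Ici R,
      HasDerivAt (fun t => -g t ^ (-α)) (α * g' t / g t ^ (α + 1)) t := by
    intro t ht
    refine ((hg t ht).rpow_const (p := -α) (Or.inl (hg_pos t ht).ne')).neg.congr_deriv ?_
    rw [show -α - 1 = -(α + 1) by ring, Real.rpow_neg (hg_pos t ht).le]
    ring
  have h_nonneg : ∀ t ∈ Ioi R, 0 ≤ α * g' t / g t ^ (α + 1) := fun t ht =>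
    div_nonneg (mul_nonneg hα.le (hg' t ht))
      (Real.rpow_nonneg (hg_pos t (mem_Ici_of_Ioi ht)).le _)
  have h_lim : Tendsto (fun t => -g t ^ (-α)) atTop (𝓝 0) := by
    simpa using ((tendsto_rpow_neg_atTop hα).comp hg_top).neg
  rw [integral_Ioi_of_hasDerivAt_of_nonneg' h_antideriv h_nonneg h_lim]
  ring

noncomputable def radialMollifier (f V : ℝ → ℝ) (α t : ℝ) : ℝ :=
  α * deriv f (V t) / f (V t) ^ (α + 1)

section radialMollifier

variable {f V : ℝ → ℝ} {α : ℝ}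

lemma contDiffOn_radialMollifier (hV : ContDiffOn ℝ 1 V (Ioi 0))
    (hV_pos : MapsTo V (Ioi 0) (Ioi 0)) (hf : ContDiffOn ℝ 2 f (Ioi 0))
    (hf_pos : ∀ s > (0:ℝ), 0 < f s) (α : ℝ) :
    ContDiffOn ℝ 1 (radialMollifier f V α) (Ioi 0) := by
  have hfV_pos : ∀ t ∈ Ioi (0:ℝ), 0 < f (V t) := fun t ht => hf_pos _ (hV_pos ht)
  have h_num : ContDiffOn ℝ 1 (fun t => α * deriv f (V t)) (Ioi 0) :=
    contDiffOn_const.mul ((hf.deriv_of_isOpen isOpen_Ioi le_rfl).comp hV hV_pos)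
  have h_den : ContDiffOn ℝ 1 (fun t => f (V t) ^ (α + 1)) (Ioi 0) :=
    ((hf.of_le one_le_two).comp hV hV_pos).rpow contDiffOn_const
      fun t ht => (hfV_pos t ht).ne'
  exact h_num.div h_den fun t ht => (Real.rpow_pos_of_pos (hfV_pos t ht) _).ne'

lemma strictAntiOn_radialMollifier (hV : StrictMonoOn V (Ioi 0))
    (hV_pos : MapsTo V (Ioi 0) (Ioi 0)) (hα : 0 < α)
    (hf_anti : StrictAntiOn (fun s => deriv f s / f s ^ (α + 1)) (Ioi 0)) :
    StrictAntiOn (radialMollifier f V α) (Ioi 0) := fun t₁ h₁ t₂ h₂ h₁₂ => by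
  simpa only [radialMollifier, mul_div_assoc] using
    mul_lt_mul_of_pos_left (hf_anti (hV_pos h₁) (hV_pos h₂) (hV h₁ h₂ h₁₂)) hα

lemma tendsto_radialMollifier_of_tendsto_zero {ι : Type*} {l : Filter ι} {a : ι → ℝ}
    (ha : Tendsto a l (𝓝 0)) {t : ℝ} (ht : f (V t) ≠ 0) :
    Tendsto (fun i => radialMollifier f V (a i) t) l (𝓝 0) := by
  have h_den : Tendsto (fun i => f (V t) ^ (a i + 1)) l (𝓝 (f (V t) ^ (1:ℝ))) :=
    tendsto_const_nhds.rpow (by simpa using ha.add_const 1) (Or.inl ht)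
  have h := (ha.mul_const (deriv f (V t))).div h_den (by simpa using ht)
  rw [zero_mul, zero_div] at h
  exact h

lemma tendsto_radialMollifier_mul_atTop (hV : Tendsto V atTop atTop)
    (hf : Tendsto (fun s => s * deriv f s / f s ^ (α + 1)) atTop (𝓝 0)) :
    Tendsto (fun t => radialMollifier f V α t * V t) atTop (𝓝 0) := by
  have h := (hf.comp hV).const_mul α
  rw [mul_zero] at h
  refine h.congr fun t => ?_
  simp only [Function.comp, radialMollifier]
  ring

lemma monotoneOn_radialMollifier_div {β : ℝ} (hβ : 0 ≤ β) (hβα : β < α)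
    (hV_mono : MonotoneOn V (Ioi 0)) (hV_pos : MapsTo V (Ioi 0) (Ioi 0))
    (hf_pos : ∀ s > (0:ℝ), 0 < f s) (hf_mono : MonotoneOn f (Ioi 0))
    (hf' : ∀ s > (0:ℝ), deriv f s ≠ 0) :
    MonotoneOn (fun t => radialMollifier f V β t / radialMollifier f V α t) (Ioi 0) := by
  have h_eq : EqOn (fun t => radialMollifier f V β t / radialMollifier f V α t)
      (fun t => β / α * f (V t) ^ (α - β)) (Ioi 0) := fun t ht =>
    div_rpow_add_one_div_div_rpow_add_one (hf_pos _ (hV_pos ht)) (hf' _ (hV_pos ht))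
      (hβ.trans_lt hβα).ne'
  refine MonotoneOn.congr (fun t₁ h₁ t₂ h₂ h₁₂ => ?_) h_eq.symm
  exact mul_le_mul_of_nonneg_left
    (Real.rpow_le_rpow (hf_pos _ (hV_pos h₁)).le
      (hf_mono (hV_pos h₁) (hV_pos h₂) (hV_mono h₁ h₂ h₁₂)) (by linarith))
    (div_nonneg hβ (hβ.trans hβα.le))

lemma integral_deriv_mul_radialMollifier {R : ℝ} (hR : 0 < R) (hα : 0 < α)
    (hV : DifferentiableOn ℝ V (Ioi 0)) (hV_mono : MonotoneOn V (Ioi 0))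
    (hV_pos : MapsTo V (Ioi 0) (Ioi 0)) (hV_top : Tendsto V atTop atTop)
    (hf : DifferentiableOn ℝ f (Ioi 0)) (hf_pos : ∀ s > (0:ℝ), 0 < f s)
    (hf_mono : MonotoneOn f (Ioi 0)) (hf_top : Tendsto f atTop atTop) :
    ∫ t in Ioi R, deriv V t * radialMollifier f V α t = f (V R) ^ (-α) := by
  have h_pos : ∀ t ∈ Ici R, t ∈ Ioi (0:ℝ) := fun t ht => hR.trans_le ht
  have h_deriv : ∀ t ∈ Ici R, HasDerivAt (f ∘ V) (deriv f (V t) * deriv V t) t := fun t ht =>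
    ((hf.differentiableAt (isOpen_Ioi.mem_nhds (hV_pos (h_pos t ht)))).hasDerivAt).comp t
      (hV.differentiableAt (isOpen_Ioi.mem_nhds (h_pos t ht))).hasDerivAt
  have h_deriv_nonneg : ∀ t ∈ Ioi R, 0 ≤ deriv f (V t) * deriv V t := fun t ht =>
    mul_nonneg (hf_mono.deriv_nonneg_of_isOpen isOpen_Ioi (hV_pos (h_pos t (mem_Ici_of_Ioi ht))))
      (hV_mono.deriv_nonneg_of_isOpen isOpen_Ioi (h_pos t (mem_Ici_of_Ioi ht)))
  refine Eq.trans ?_ (integral_Ioi_mul_deriv_div_rpow_add_one (g := f ∘ V) hα h_deriv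
    (fun t ht => hf_pos _ (hV_pos (h_pos t ht))) h_deriv_nonneg (hf_top.comp hV_top))
  congr 1 with t
  simp only [radialMollifier, Function.comp]
  ring

end radialMollifier

/-- Lemma 2.14: given a strictly decreasing positive sequence `a_n → 0` and a positive
increasing `C²` function `f` with `f(s) → ∞`, `s f'(s)/f(s)^r → 0` and `f'/f^r` strictly
decreasing (for all `r > 1`), the radial mollifiers
`ρ̃_n(t) = a_n f'(V(t)) / f(V(t))^{a_n+1}` satisfy Condition 3 associated to `V`. -/
theorem mollifiers_from_f_satisfy_condition3
    -- `V` is a `C¹` strictly increasing function on `[0,∞)` with `V(t) → ∞`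
    (V : ℝ → ℝ) (hV0 : 0 ≤ V 0) (hVmono : StrictMonoOn V (Set.Ici 0))
    (hVC1 : ContDiffOn ℝ 1 V (Set.Ici 0)) (hVtop : Tendsto V atTop atTop)
    (a : ℕ → ℝ) (ha_pos : ∀ n, 0 < a n) (ha_anti : StrictAnti a)
    (ha_lim : Tendsto a atTop (nhds 0))
    (f : ℝ → ℝ)
    (hf_pos : ∀ s > (0:ℝ), 0 < f s)
    (hf_mono : MonotoneOn f (Set.Ioi 0))
    (hf_C2 : ContDiffOn ℝ 2 f (Set.Ioi 0))
    -- (i)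
    (hf_top : Tendsto f atTop atTop)
    -- (ii)
    (hf_ratio_lim : ∀ r : ℝ, 1 < r →
      Tendsto (fun s => s * deriv f s / f s ^ r) atTop (nhds 0))
    -- (iii)
    (hf_ratio_anti : ∀ r : ℝ, 1 < r →
      StrictAntiOn (fun s => deriv f s / f s ^ r) (Set.Ioi 0)) :
    -- each `ρ̃_n` is `C¹` on `(0,∞)`
    (∀ n, ContDiffOn ℝ 1 (fun t => a n * deriv f (V t) / f (V t) ^ (a n + 1)) (Set.Ioi 0)) ∧
    -- each `ρ̃_n` is strictly decreasing on `(0,∞)`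
    (∀ n, StrictAntiOn (fun t => a n * deriv f (V t) / f (V t) ^ (a n + 1)) (Set.Ioi 0)) ∧
    -- Condition 3 (A)
    (∀ r > (0:ℝ), Tendsto (fun n => a n * deriv f (V r) / f (V r) ^ (a n + 1))
      atTop (nhds 0)) ∧
    (∀ n, Tendsto (fun t => (a n * deriv f (V t) / f (V t) ^ (a n + 1)) * V t)
      atTop (nhds 0)) ∧
    -- Condition 3 (B)
    (∀ i j : ℕ, i < j →
      MonotoneOn (fun t => (a j * deriv f (V t) / f (V t) ^ (a j + 1)) /
        (a i * deriv f (V t) / f (V t) ^ (a i + 1))) (Set.Ioi 0)) ∧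
    -- Condition 3 (C)
    (∃ I : ℝ → ℝ,
      (∀ R > (0:ℝ), Tendsto (fun n => ∫ t in Set.Ioi R,
          deriv V t * (a n * deriv f (V t) / f (V t) ^ (a n + 1))) atTop (nhds (I R))) ∧
      Tendsto I atTop (nhds 1)) := by
  have hV_pos : MapsTo V (Ioi 0) (Ioi 0) := fun t ht =>
    hV0.trans_lt (hVmono (mem_Ici.mpr le_rfl) (mem_Ici.mpr (le_of_lt ht)) ht)
  have hV_strictMono : StrictMonoOn V (Ioi 0) := hVmono.mono Ioi_subset_Ici_self
  have hV_C1 : ContDiffOn ℝ 1 V (Ioi 0) := hVC1.mono Ioi_subset_Ici_self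
  have hf'_pos : ∀ s > (0:ℝ), 0 < deriv f s := fun s hs =>
    deriv_pos_of_strictAntiOn_deriv_div_rpow hs hf_pos hf_mono (hf_ratio_anti 2 one_lt_two)
  have h_exp : ∀ n, 1 < a n + 1 := fun n => by linarith [ha_pos n]
  refine ⟨fun n => contDiffOn_radialMollifier hV_C1 hV_pos hf_C2 hf_pos (a n),
    fun n => strictAntiOn_radialMollifier hV_strictMono hV_pos (ha_pos n)
      (hf_ratio_anti _ (h_exp n)),
    fun r hr => tendsto_radialMollifier_of_tendsto_zero ha_lim (hf_pos _ (hV_pos hr)).ne',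
    fun n => tendsto_radialMollifier_mul_atTop hVtop (hf_ratio_lim _ (h_exp n)),
    fun i j hij => monotoneOn_radialMollifier_div (ha_pos j).le (ha_anti hij)
      hV_strictMono.monotoneOn hV_pos hf_pos hf_mono fun s hs => (hf'_pos s hs).ne',
    fun _ => 1, fun R hR => ?_, tendsto_const_nhds⟩
  have h_lim : Tendsto (fun n => f (V R) ^ (-a n)) atTop (𝓝 1) := by
    simpa using tendsto_const_nhds.rpow ha_lim.neg (Or.inl (hf_pos _ (hV_pos hR)).ne')
  refine h_lim.congr fun n => (integral_deriv_mul_radialMollifier hR (ha_pos n)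
    (hV_C1.differentiableOn one_ne_zero) hV_strictMono.monotoneOn hV_pos hVtop
    (hf_C2.differentiableOn two_ne_zero) hf_pos hf_mono hf_top).symm
end

section
/- Let N ∈ ℕ, N ≥ 1, and p ≥ 1. For every u ∈ L^p(ℝ^N) such that ∬_{ℝ^N×ℝ^N} |u(x)−u(y)|^p / |x−y|^{N+s₀p} dx dy < ∞ for some s₀ ∈ (0,1), one has lim_{s↓0} s ∬_{ℝ^N×ℝ^N} |u(x)−u(y)|^p / |x−y|^{N+sp} dx dy = (2Nω_N/p) ‖u‖_{L^p(ℝ^N)}^p, where ω_N = π^{N/2}/Γ(N/2 + 1) is the Lebesgue measure of the unit ball of ℝ^N. -/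
/-!
Write `D(h) = ‖u(· + h) - u‖ₚᵖ`. By Tonelli and the substitution `y = x + h`, the Gagliardo
energy with exponent `N + sp` equals `∫ |h|^(-(N + sp)) D(h) dh`. On the unit ball, `s` times
this integral is at most `s` times the finite energy at `s₀`, so it vanishes as `s → 0`. Off the
unit ball, the measures `s |h|^(-(N + sp)) dh` give mass `(N ω_N / p) R^(-sp)` to the complement
of every ball of radius `R ≥ 1`: as `s → 0` their mass `N ω_N / p` escapes to infinity. There
`D(h) → 2 ‖u‖ₚᵖ`: for compactly supported `v` the translate `v(· + h)` eventually has support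
disjoint from that of `v`, and such `v` are dense in `Lᵖ`.
-/

open MeasureTheory Filter Topology Metric Set ENNReal Bornology

local notation "dim" => Module.finrank ℝ

theorem lintegral_Ioi_rpow_of_lt {a R : ℝ} (ha : a < -1) (hR : 0 < R) :
    ∫⁻ y in Ioi R, ENNReal.ofReal (y ^ a) = ENNReal.ofReal (-R ^ (a + 1) / (a + 1)) := by
  rw [← ofReal_integral_eq_lintegral_ofReal (integrableOn_Ioi_rpow_of_lt ha hR),
    integral_Ioi_rpow_of_lt ha hR]
  filter_upwards [ae_restrict_mem measurableSet_Ioi] with y hy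
  exact Real.rpow_nonneg (hR.trans hy).le a

section RadialIntegrals

variable {E : Type*} [NormedAddCommGroup E] [NormedSpace ℝ E] [FiniteDimensional ℝ E]
  [MeasurableSpace E] [BorelSpace E] [Nontrivial E] (μ : Measure E) [μ.IsAddHaarMeasure]

theorem lintegral_fun_norm_addHaar {f : ℝ → ℝ≥0∞} (hf : Measurable f) :
    ∫⁻ x, f ‖x‖ ∂μ =
      dim E * μ (ball 0 1) * ∫⁻ y in Ioi (0 : ℝ), ENNReal.ofReal (y ^ (dim E - 1)) * f y := by
  calc ∫⁻ x, f ‖x‖ ∂μ = ∫⁻ x : ({(0 : E)}ᶜ : Set E), f ‖x.1‖ ∂(μ.comap (↑)) := by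
        rw [lintegral_subtype_comap (measurableSet_singleton _).compl fun x ↦ f ‖x‖,
          restrict_compl_singleton]
    _ = ∫⁻ x, f x.2 ∂μ.toSphere.prod (.volumeIoiPow (dim E - 1)) := by
        simpa using μ.measurePreserving_homeomorphUnitSphereProd.lintegral_comp_emb
          (Homeomorph.measurableEmbedding _) (f ∘ Subtype.val ∘ Prod.snd)
    _ = μ.toSphere univ * ∫⁻ y : Ioi (0 : ℝ), f y ∂.volumeIoiPow (dim E - 1) := by
        rw [lintegral_prod _ (by fun_prop)]
        dsimp only
        exact (lintegral_const _).trans (mul_comm _ _)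
    _ = _ := by
        rw [μ.toSphere_apply_univ, Measure.volumeIoiPow,
          lintegral_withDensity_eq_lintegral_mul _ (by fun_prop) (by fun_prop)]
        exact congrArg _ (lintegral_subtype_comap measurableSet_Ioi
          fun y ↦ ENNReal.ofReal (y ^ (dim E - 1)) * f y)

theorem lintegral_compl_ball_rpow_neg {a R : ℝ} (ha : dim E < a) (hR : 0 < R) :
    ∫⁻ x in (ball (0 : E) R)ᶜ, ‖x‖ₑ ^ (-a) ∂μ =
      ENNReal.ofReal (dim E / (a - dim E) * R ^ (dim E - a)) * μ (ball 0 1) := by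
  have hradial : ∫⁻ x in (ball (0 : E) R)ᶜ, ‖x‖ₑ ^ (-a) ∂μ =
      ∫⁻ x, (Ici R).indicator (fun r ↦ ENNReal.ofReal (r ^ (-a))) ‖x‖ ∂μ := by
    rw [← lintegral_indicator measurableSet_ball.compl]
    congr 1 with x
    by_cases hx : R ≤ ‖x‖
    · have hx' : x ∈ (ball (0 : E) R)ᶜ := by simpa using hx
      rw [indicator_of_mem hx', indicator_of_mem (mem_Ici.2 hx),
        ← ENNReal.ofReal_rpow_of_pos (hR.trans_le hx), ofReal_norm]
    · have hx' : x ∉ (ball (0 : E) R)ᶜ := by simpa using hx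
      rw [indicator_of_notMem hx', indicator_of_notMem (by simpa using hx)]
  have hradius : ∫⁻ y in Ioi (0 : ℝ), ENNReal.ofReal (y ^ (dim E - 1)) *
      (Ici R).indicator (fun r ↦ ENNReal.ofReal (r ^ (-a))) y =
      ∫⁻ y in Ioi R, ENNReal.ofReal (y ^ ((dim E : ℝ) - 1 - a)) := by
    simp_rw [← indicator_mul_right (Ici R) fun y ↦ ENNReal.ofReal (y ^ (dim E - 1))]
    rw [lintegral_indicator measurableSet_Ici, Measure.restrict_restrict measurableSet_Ici,
      inter_eq_left.2 (Ici_subset_Ioi.2 hR), setLIntegral_congr Ioi_ae_eq_Ici.symm]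
    refine setLIntegral_congr_fun measurableSet_Ioi fun y hy ↦ ?_
    have hy : 0 < y := hR.trans hy
    rw [← ENNReal.ofReal_mul (by positivity), ← Real.rpow_natCast, ← Real.rpow_add hy,
      Nat.cast_sub Module.finrank_pos, Nat.cast_one, sub_eq_add_neg _ a]
  have hd : (1 : ℝ) ≤ dim E := by exact_mod_cast Module.finrank_pos (R := ℝ) (M := E)
  rw [hradial, lintegral_fun_norm_addHaar μ (by measurability), hradius,
    lintegral_Ioi_rpow_of_lt (by linarith) hR, mul_comm, ← mul_assoc, mul_comm _ (dim E : ℝ≥0∞),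
    ← ENNReal.ofReal_natCast, ← ENNReal.ofReal_mul (by positivity)]
  congr 2
  rw [show (dim E : ℝ) - 1 - a + 1 = dim E - a by ring, neg_div, ← div_neg, neg_sub]
  ring

variable {p : ℝ}

theorem ofReal_mul_lintegral_compl_ball_rpow_neg (hp : 0 < p) {s R : ℝ} (hs : 0 < s)
    (hR : 0 < R) :
    ENNReal.ofReal s * ∫⁻ h in (ball (0 : E) R)ᶜ, ‖h‖ₑ ^ (-(dim E + s * p)) ∂μ =
      ENNReal.ofReal (dim E / p * R ^ (-(s * p))) * μ (ball 0 1) := by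
  rw [lintegral_compl_ball_rpow_neg μ (by nlinarith) hR, ← mul_assoc, ← ENNReal.ofReal_mul hs.le]
  congr 2
  rw [add_sub_cancel_left, sub_add_cancel_left]
  field_simp

theorem tendsto_ofReal_mul_lintegral_compl_ball_rpow_neg (hp : 0 < p) {R : ℝ} (hR : 0 < R) :
    Tendsto (fun s ↦ ENNReal.ofReal s * ∫⁻ h in (ball (0 : E) R)ᶜ, ‖h‖ₑ ^ (-(dim E + s * p)) ∂μ)
      (𝓝[>] 0) (𝓝 (ENNReal.ofReal (dim E / p) * μ (ball 0 1))) := by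
  have hcont : Tendsto (fun s ↦ dim E / p * R ^ (-(s * p))) (𝓝 0) (𝓝 (dim E / p)) := by
    simpa using ((Real.continuous_const_rpow hR.ne').tendsto _).comp
      ((continuous_id.mul continuous_const).neg.tendsto 0) |>.const_mul _
  refine Tendsto.congr' ?_ (ENNReal.Tendsto.mul_const (ENNReal.tendsto_ofReal
    (hcont.mono_left nhdsWithin_le_nhds)) (Or.inr measure_ball_lt_top.ne))
  filter_upwards [self_mem_nhdsWithin] with s hs
  exact (ofReal_mul_lintegral_compl_ball_rpow_neg μ hp hs hR).symm

end RadialIntegrals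

theorem lintegral_le_of_le_on_of_le {X : Type*} [MeasurableSpace X] {ν : Measure X} {g : X → ℝ≥0∞}
    {S : Set X} (hS : MeasurableSet S) (hSfin : ν S ≠ ∞) {b C : ℝ≥0∞} (hgC : ∀ x, g x ≤ C)
    (hgS : ∀ x ∈ S, g x ≤ b) :
    ∫⁻ x, g x ∂ν ≤ b * ν S + C * (ν univ - ν S) := calc
  ∫⁻ x, g x ∂ν = ∫⁻ x in S, g x ∂ν + ∫⁻ x in Sᶜ, g x ∂ν := (lintegral_add_compl _ hS).symm
  _ ≤ ∫⁻ _ in S, b ∂ν + ∫⁻ _ in Sᶜ, C ∂ν := by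
    gcongr ?_ + ?_
    · exact setLIntegral_mono_ae' hS (.of_forall hgS)
    · exact lintegral_mono fun x ↦ hgC x
  _ = b * ν S + C * (ν univ - ν S) := by
    rw [setLIntegral_const, setLIntegral_const, measure_compl hS hSfin]

theorem tendsto_lintegral_of_measure_escapes {E ι : Type*} [NormedAddCommGroup E]
    [MeasurableSpace E] [OpensMeasurableSpace E] {l : Filter ι} {μ : ι → Measure E}
    {g : E → ℝ≥0∞} {C T κ : ℝ≥0∞} (hC : C ≠ ∞) (hgC : ∀ x, g x ≤ C) (hT : T ≠ ∞) (hκ : κ ≠ ∞)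
    (hg : Tendsto g (cobounded E) (𝓝 T)) (hμ : ∀ R, Tendsto (fun i ↦ μ i (ball 0 R)ᶜ) l (𝓝 κ)) :
    Tendsto (fun i ↦ ∫⁻ x, g x ∂μ i) l (𝓝 (T * κ)) := by
  rcases l.eq_or_neBot with rfl | _
  · exact tendsto_bot
  set F := fun i ↦ ∫⁻ x, g x ∂μ i
  have hmass : Tendsto (fun i ↦ μ i univ) l (𝓝 κ) := by simpa using hμ 0
  have hbounds : ∀ ε ∈ Ioo (0 : ℝ≥0∞) 1, (T - ε) * κ ≤ liminf F l ∧ limsup F l ≤ (T + ε) * κ := by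
    intro ε ⟨hε, hε1⟩
    obtain ⟨r, -, hr⟩ := (hasBasis_cobounded_compl_closedBall (0 : E)).eventually_iff.1
      ((ENNReal.tendsto_nhds hT).1 hg ε hε)
    set S := (ball (0 : E) (r + 1))ᶜ
    have hgS : ∀ x ∈ S, g x ∈ Icc (T - ε) (T + ε) := fun x hx ↦ hr (by
      simp only [S, mem_compl_iff, mem_ball, mem_closedBall, not_lt, dist_zero_right] at hx ⊢
      linarith)
    have hS : MeasurableSet S := measurableSet_ball.compl
    constructor
    · calc (T - ε) * κ = liminf (fun i ↦ (T - ε) * μ i S) l :=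
            ((ENNReal.Tendsto.const_mul (hμ (r + 1)) (Or.inr (sub_ne_top hT))).liminf_eq).symm
        _ ≤ liminf F l := liminf_le_liminf <| .of_forall fun i ↦ calc
            (T - ε) * μ i S = ∫⁻ _ in S, T - ε ∂μ i := (setLIntegral_const S _).symm
            _ ≤ ∫⁻ x in S, g x ∂μ i := setLIntegral_mono_ae' hS (.of_forall fun x hx ↦ (hgS x hx).1)
            _ ≤ F i := setLIntegral_le_lintegral S _
    · calc limsup F l ≤ limsup (fun i ↦ (T + ε) * μ i S + C * (μ i univ - μ i S)) l :=
            limsup_le_limsup <| ((hμ (r + 1)).eventually_ne hκ).mono fun i hfin ↦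
              lintegral_le_of_le_on_of_le hS hfin hgC fun x hx ↦ (hgS x hx).2
        _ = (T + ε) * κ := by
          refine Tendsto.limsup_eq ?_
          simpa using (ENNReal.Tendsto.const_mul (hμ (r + 1))
            (Or.inr (add_ne_top.2 ⟨hT, ne_top_of_lt hε1⟩))).add (ENNReal.Tendsto.const_mul
              (ENNReal.Tendsto.sub hmass (hμ (r + 1)) (Or.inl hκ)) (Or.inr hC))
  have hε : ∀ {f : ℝ≥0∞ → ℝ≥0∞}, Continuous f → f 0 = T →
      Tendsto (fun ε ↦ f ε * κ) (𝓝[>] 0) (𝓝 (T * κ)) := fun hf h0 ↦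
    ENNReal.Tendsto.mul_const (h0 ▸ hf.continuousAt.tendsto.mono_left nhdsWithin_le_nhds)
      (Or.inr hκ)
  refine tendsto_of_le_liminf_of_limsup_le ?_ ?_
  · refine le_of_tendsto (hε (ENNReal.continuous_sub_left hT) (tsub_zero T)) ?_
    filter_upwards [Ioo_mem_nhdsGT one_pos] with ε hε using (hbounds ε hε).1
  · refine ge_of_tendsto (hε (continuous_const_add T) (add_zero T)) ?_
    filter_upwards [Ioo_mem_nhdsGT one_pos] with ε hε using (hbounds ε hε).2

theorem tendsto_ofReal_mul_setLIntegral_ball_rpow_neg {E : Type*} [NormedAddCommGroup E]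
    [MeasurableSpace E] [OpensMeasurableSpace E] {μ : Measure E} {g : E → ℝ≥0∞} {b p s₀ : ℝ}
    (hp : 0 ≤ p) (hs₀ : 0 < s₀) (hfin : ∫⁻ h, ‖h‖ₑ ^ (-(b + s₀ * p)) * g h ∂μ ≠ ∞) :
    Tendsto (fun s ↦ ENNReal.ofReal s * ∫⁻ h in ball 0 1, ‖h‖ₑ ^ (-(b + s * p)) * g h ∂μ)
      (𝓝[>] 0) (𝓝 0) := by
  have hle : ∀ s ∈ Ioo 0 s₀, ∫⁻ h in ball 0 1, ‖h‖ₑ ^ (-(b + s * p)) * g h ∂μ ≤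
      ∫⁻ h, ‖h‖ₑ ^ (-(b + s₀ * p)) * g h ∂μ := fun s hs ↦ calc
    _ ≤ ∫⁻ h in ball 0 1, ‖h‖ₑ ^ (-(b + s₀ * p)) * g h ∂μ := by
      refine setLIntegral_mono' measurableSet_ball fun h hh ↦ ?_
      have hh1 : ‖h‖ₑ ≤ 1 := by
        rw [← ofReal_norm]; exact ENNReal.ofReal_le_one.2 (mem_ball_zero_iff.1 hh).le
      exact mul_le_mul_left (ENNReal.rpow_le_rpow_of_exponent_ge hh1 (by nlinarith [hs.2])) _
    _ ≤ _ := setLIntegral_le_lintegral _ _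
  have hlim : Tendsto (fun s ↦ ENNReal.ofReal s * ∫⁻ h, ‖h‖ₑ ^ (-(b + s₀ * p)) * g h ∂μ)
      (𝓝[>] 0) (𝓝 0) := by
    simpa using ENNReal.Tendsto.mul_const
      ((ENNReal.tendsto_ofReal tendsto_id).mono_left (nhdsWithin_le_nhds (a := (0 : ℝ))))
      (Or.inr hfin)
  refine tendsto_of_tendsto_of_tendsto_of_le_of_le' tendsto_const_nhds hlim
    (.of_forall fun _ ↦ zero_le) ?_
  filter_upwards [Ioo_mem_nhdsGT hs₀] with s hs
  exact mul_le_mul_right (hle s hs) _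

theorem tendsto_ofReal_mul_setLIntegral_compl_ball_rpow_neg {E : Type*} [NormedAddCommGroup E]
    [NormedSpace ℝ E] [FiniteDimensional ℝ E] [MeasurableSpace E] [BorelSpace E] [Nontrivial E]
    {μ : Measure E} [μ.IsAddHaarMeasure] {p : ℝ} (hp : 0 < p) {g : E → ℝ≥0∞}
    (hgm : Measurable g) {C T : ℝ≥0∞} (hC : C ≠ ∞) (hgC : ∀ x, g x ≤ C) (hT : T ≠ ∞)
    (hg : Tendsto g (cobounded E) (𝓝 T)) :
    Tendsto (fun s ↦ ENNReal.ofReal s * ∫⁻ h in (ball 0 1)ᶜ, ‖h‖ₑ ^ (-(dim E + s * p)) * g h ∂μ)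
      (𝓝[>] 0) (𝓝 (T * (ENNReal.ofReal (dim E / p) * μ (ball 0 1)))) := by
  set W := fun (s : ℝ) (h : E) ↦ ‖h‖ₑ ^ (-(dim E + s * p))
  have hW : ∀ s, Measurable (W s) := fun s ↦ by fun_prop
  set ν := fun s ↦ ENNReal.ofReal s • (μ.restrict (ball 0 1)ᶜ).withDensity (W s)
  have hν : ∀ R, Tendsto (fun s ↦ ν s (ball 0 R)ᶜ) (𝓝[>] 0)
      (𝓝 (ENNReal.ofReal (dim E / p) * μ (ball 0 1))) := fun R ↦ by
    refine (tendsto_ofReal_mul_lintegral_compl_ball_rpow_neg μ hp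
      (zero_lt_one.trans_le (le_max_right R 1))).congr fun s ↦ ?_
    have hR : (ball (0 : E) R)ᶜ ∩ (ball 0 1)ᶜ = (ball 0 (max R 1))ᶜ := by ext x; simp
    rw [Measure.smul_apply, smul_eq_mul, withDensity_apply _ measurableSet_ball.compl,
      Measure.restrict_restrict measurableSet_ball.compl, hR]
  refine (tendsto_lintegral_of_measure_escapes hC hgC hT
    (mul_ne_top ofReal_ne_top measure_ball_lt_top.ne) hg hν).congr fun s ↦ ?_
  rw [lintegral_smul_measure, lintegral_withDensity_eq_lintegral_mul _ (hW s) hgm]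
  rfl

theorem lintegral_enorm_rpow_eq_eLpNorm_rpow {α F : Type*} [MeasurableSpace α] {ν : Measure α}
    [ENorm F] {p : ℝ} (hp : 0 < p) (f : α → F) :
    ∫⁻ x, ‖f x‖ₑ ^ p ∂ν = eLpNorm f (ENNReal.ofReal p) ν ^ p := by
  rw [eLpNorm_eq_eLpNorm' (by simpa) ofReal_ne_top, toReal_ofReal hp.le,
    lintegral_rpow_enorm_eq_rpow_eLpNorm' hp]

section Translation
variable {E F : Type*} [AddGroup E] [MeasurableSpace E] [MeasurableAdd E] {μ : Measure E}
  [μ.IsAddRightInvariant] [NormedAddCommGroup F] {p : ℝ}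

theorem eLpNorm_comp_add_right {u : E → F} (hu : AEStronglyMeasurable u μ) (q : ℝ≥0∞) (h : E) :
    eLpNorm (fun x ↦ u (x + h)) q μ = eLpNorm u q μ :=
  eLpNorm_comp_measurePreserving hu (measurePreserving_add_right μ h)

theorem eLpNorm_translate_sub_le {u v : E → F} (hu : AEStronglyMeasurable u μ)
    (hv : AEStronglyMeasurable v μ) {q : ℝ≥0∞} (hq : 1 ≤ q) (h : E) :
    eLpNorm (fun x ↦ u (x + h) - u x) q μ ≤
      eLpNorm (fun x ↦ v (x + h) - v x) q μ + 2 * eLpNorm (u - v) q μ := by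
  have hw : AEStronglyMeasurable (u - v) μ := hu.sub hv
  have hτ : ∀ {w : E → F}, AEStronglyMeasurable w μ → AEStronglyMeasurable (fun x ↦ w (x + h)) μ :=
    fun hw ↦ hw.comp_measurePreserving (measurePreserving_add_right μ h)
  calc eLpNorm (fun x ↦ u (x + h) - u x) q μ
      = eLpNorm ((fun x ↦ v (x + h) - v x) + ((fun x ↦ (u - v) (x + h)) - (u - v))) q μ := by
        congr 1 with x; simp only [Pi.add_apply, Pi.sub_apply]; abel
    _ ≤ eLpNorm (fun x ↦ v (x + h) - v x) q μ +
          (eLpNorm (fun x ↦ (u - v) (x + h)) q μ + eLpNorm (u - v) q μ) :=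
        (eLpNorm_add_le ((hτ hv).sub hv) ((hτ hw).sub hw) hq).trans
          (add_le_add_right (eLpNorm_sub_le (hτ hw) hw hq) _)
    _ = eLpNorm (fun x ↦ v (x + h) - v x) q μ + 2 * eLpNorm (u - v) q μ := by
        rw [eLpNorm_comp_add_right hw, two_mul]

noncomputable def translateDiff (μ : Measure E) (p : ℝ) (u : E → F) (h : E) : ℝ≥0∞ :=
  ∫⁻ x, ‖u (x + h) - u x‖ₑ ^ p ∂μ

theorem translateDiff_le {u : E → F} (hp : 1 ≤ p) (hu : AEStronglyMeasurable u μ) (h : E) :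
    translateDiff μ p u h ≤ 2 ^ p * ∫⁻ x, ‖u x‖ₑ ^ p ∂μ := by
  have hp0 : 0 < p := one_pos.trans_le hp
  rw [translateDiff, lintegral_enorm_rpow_eq_eLpNorm_rpow hp0,
    lintegral_enorm_rpow_eq_eLpNorm_rpow hp0, ← ENNReal.mul_rpow_of_nonneg _ _ hp0.le]
  gcongr
  calc eLpNorm (fun x ↦ u (x + h) - u x) (ENNReal.ofReal p) μ
      ≤ eLpNorm (fun x ↦ u (x + h)) (ENNReal.ofReal p) μ + eLpNorm u (ENNReal.ofReal p) μ :=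
        eLpNorm_sub_le (hu.comp_measurePreserving (measurePreserving_add_right μ h)) hu
          (ENNReal.one_le_ofReal.2 hp)
    _ = 2 * eLpNorm u (ENNReal.ofReal p) μ := by rw [eLpNorm_comp_add_right hu, two_mul]

end Translation

section CompactSupport
variable {E F : Type*} [NormedAddCommGroup E] [MeasurableSpace E] [MeasurableAdd E]
  {μ : Measure E} [μ.IsAddRightInvariant] [NormedAddCommGroup F] {p : ℝ}

theorem HasCompactSupport.eventually_translateDiff_eq {v : E → F} (hv : HasCompactSupport v)
    (hvm : AEStronglyMeasurable v μ) (hp : 0 < p) :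
    ∀ᶠ h in cobounded E, translateDiff μ p v h = 2 * ∫⁻ x, ‖v x‖ₑ ^ p ∂μ := by
  obtain ⟨r, hr⟩ := hv.isCompact.isBounded.subset_closedBall (0 : E)
  have hsupp : ∀ {x}, v x ≠ 0 → ‖x‖ ≤ r := fun hx ↦ by
    simpa using hr (subset_tsupport v hx)
  filter_upwards [(hasBasis_cobounded_compl_closedBall (0 : E)).mem_of_mem (i := 2 * r) trivial]
    with h hh
  have hh : 2 * r < ‖h‖ := by simpa using hh
  have hdisj : ∀ x, ‖v (x + h) - v x‖ₑ ^ p = ‖v (x + h)‖ₑ ^ p + ‖v x‖ₑ ^ p := by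
    intro x
    by_cases hx : v x = 0
    · simp [hx, ENNReal.zero_rpow_of_pos hp]
    have hxh : v (x + h) = 0 := by
      by_contra hxh
      have := norm_sub_le (x + h) x
      simp only [add_sub_cancel_left] at this
      linarith [hsupp hx, hsupp hxh]
    simp [hxh, ENNReal.zero_rpow_of_pos hp]
  rw [translateDiff, lintegral_congr hdisj, lintegral_add_left' ?_, two_mul,
    lintegral_add_right_eq_self (fun x ↦ ‖v x‖ₑ ^ p) h]
  exact ((hvm.comp_measurePreserving (measurePreserving_add_right μ h)).enorm.pow_const p)

theorem HasCompactSupport.eventually_eLpNorm_translate_sub {v : E → F}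
    (hv : HasCompactSupport v) (hvm : AEStronglyMeasurable v μ) (hp : 0 < p) :
    ∀ᶠ h in cobounded E, eLpNorm (fun x ↦ v (x + h) - v x) (ENNReal.ofReal p) μ =
      2 ^ p⁻¹ * eLpNorm v (ENNReal.ofReal p) μ := by
  filter_upwards [hv.eventually_translateDiff_eq hvm hp] with h hh
  apply ENNReal.rpow_left_injective hp.ne'
  simp only
  rw [← lintegral_enorm_rpow_eq_eLpNorm_rpow hp, ← translateDiff, hh, lintegral_enorm_rpow_eq_eLpNorm_rpow hp,
    ENNReal.mul_rpow_of_nonneg _ _ hp.le, ← ENNReal.rpow_mul, inv_mul_cancel₀ hp.ne',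
    ENNReal.rpow_one]

end CompactSupport

section TranslateLimit
variable {E F : Type*} [NormedAddCommGroup E] [NormedSpace ℝ E] [FiniteDimensional ℝ E]
  [MeasurableSpace E] [BorelSpace E] {μ : Measure E} [μ.IsAddHaarMeasure]
  [NormedAddCommGroup F] [NormedSpace ℝ F] {p : ℝ}

theorem tendsto_eLpNorm_translate_sub {u : E → F} (hp : 1 ≤ p)
    (hu : MemLp u (ENNReal.ofReal p) μ) :
    Tendsto (fun h ↦ eLpNorm (fun x ↦ u (x + h) - u x) (ENNReal.ofReal p) μ) (cobounded E)
      (𝓝 (2 ^ p⁻¹ * eLpNorm u (ENNReal.ofReal p) μ)) := by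
  have hp0 : 0 < p := one_pos.trans_le hp
  have hq : 1 ≤ ENNReal.ofReal p := ENNReal.one_le_ofReal.2 hp
  have hc : (2 : ℝ≥0∞) ^ p⁻¹ ≤ 2 := calc
    (2 : ℝ≥0∞) ^ p⁻¹ ≤ 2 ^ (1 : ℝ) :=
      rpow_le_rpow_of_exponent_le one_le_two (inv_le_one_of_one_le₀ hp)
    _ = 2 := rpow_one 2
  refine (ENNReal.tendsto_nhds (mul_ne_top (ne_top_of_le_ne_top ofNat_ne_top hc)
    hu.eLpNorm_ne_top)).2 fun ε hε ↦ ?_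
  obtain ⟨v, hv_supp, hv_close, hv_cont, -⟩ :=
    hu.exists_hasCompactSupport_eLpNorm_sub_le ofReal_ne_top (ε := ε / 4) (by simpa using hε.ne')
  have hvm : AEStronglyMeasurable v μ := hv_cont.aestronglyMeasurable
  filter_upwards [hv_supp.eventually_eLpNorm_translate_sub hvm hp0] with h hv_h
  have huv := eLpNorm_translate_sub_le hu.1 hvm hq h
  have hvu := eLpNorm_translate_sub_le hvm hu.1 hq h
  rw [hv_h] at huv hvu
  rw [eLpNorm_sub_comm] at hvu
  set q := ENNReal.ofReal p
  set c : ℝ≥0∞ := 2 ^ p⁻¹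
  set δ := ε / 4
  have hv_le : eLpNorm v q μ ≤ eLpNorm u q μ + δ := calc
    eLpNorm v q μ = eLpNorm (u - (u - v)) q μ := by rw [sub_sub_cancel u v]
    _ ≤ eLpNorm u q μ + δ := (eLpNorm_sub_le hu.1 (hu.1.sub hvm) hq).trans (by gcongr)
  have hu_le : eLpNorm u q μ ≤ eLpNorm v q μ + δ := calc
    eLpNorm u q μ = eLpNorm (v + (u - v)) q μ := by rw [add_sub_cancel v u]
    _ ≤ eLpNorm v q μ + δ := (eLpNorm_add_le hvm (hu.1.sub hvm) hq).trans (by gcongr)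
  have hε4 : ε = 2 * δ + 2 * δ := by
    rw [← add_mul, two_add_two_eq_four, ENNReal.mul_div_cancel' (by norm_num) (by norm_num)]
  constructor
  · rw [tsub_le_iff_right]
    calc c * eLpNorm u q μ ≤ c * eLpNorm v q μ + c * δ := by rw [← mul_add]; gcongr
      _ ≤ eLpNorm (fun x ↦ u (x + h) - u x) q μ + 2 * δ + 2 * δ := by
          gcongr
          exact hvu.trans (by gcongr)
      _ = _ := by rw [hε4, add_assoc]
  · calc eLpNorm (fun x ↦ u (x + h) - u x) q μ ≤ c * eLpNorm v q μ + 2 * δ := huv.trans (by gcongr)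
      _ ≤ c * eLpNorm u q μ + c * δ + 2 * δ := by rw [← mul_add]; gcongr
      _ ≤ _ := by rw [hε4, add_assoc]; gcongr

theorem tendsto_translateDiff {u : E → F} (hp : 1 ≤ p) (hu : MemLp u (ENNReal.ofReal p) μ) :
    Tendsto (translateDiff μ p u) (cobounded E) (𝓝 (2 * ∫⁻ x, ‖u x‖ₑ ^ p ∂μ)) := by
  have hp0 : 0 < p := one_pos.trans_le hp
  have hlim := ((ENNReal.continuous_rpow_const (y := p)).tendsto _).comp
    (tendsto_eLpNorm_translate_sub hp hu)
  rw [ENNReal.mul_rpow_of_nonneg _ _ hp0.le, ← ENNReal.rpow_mul, inv_mul_cancel₀ hp0.ne',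
    rpow_one, ← lintegral_enorm_rpow_eq_eLpNorm_rpow hp0] at hlim
  exact hlim.congr fun h ↦ (lintegral_enorm_rpow_eq_eLpNorm_rpow hp0 _).symm

end TranslateLimit

noncomputable def gagliardo {E : Type*} [PseudoMetricSpace E] [MeasurableSpace E] (μ : Measure E)
    (p a : ℝ) (u : E → ℝ) : ℝ≥0∞ :=
  ∫⁻ x, ∫⁻ y, ENNReal.ofReal (|u x - u y| ^ p / dist x y ^ a) ∂μ ∂μ

theorem gagliardo_congr_ae {E : Type*} [PseudoMetricSpace E] [MeasurableSpace E] {μ : Measure E}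
    {p a : ℝ} {u v : E → ℝ} (huv : u =ᵐ[μ] v) : gagliardo μ p a u = gagliardo μ p a v := by
  refine lintegral_congr_ae (huv.mono fun x hx ↦ lintegral_congr_ae (huv.mono fun y hy ↦ ?_))
  simp only [hx, hy]

theorem ofReal_abs_sub_rpow_div_dist_rpow {E : Type*} [NormedAddCommGroup E] (u : E → ℝ) {p : ℝ}
    (hp : 0 < p) (a : ℝ) (x y : E) :
    ENNReal.ofReal (|u x - u y| ^ p / dist x y ^ a) = ‖u y - u x‖ₑ ^ p * ‖y - x‖ₑ ^ (-a) := by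
  -- on the diagonal both sides vanish, as `0 / 0 = 0` in `ℝ` and `0 * ∞ = 0` in `ℝ≥0∞`
  rcases eq_or_ne x y with rfl | hxy
  · simp [ENNReal.zero_rpow_of_pos hp, Real.zero_rpow hp.ne']
  have hd : 0 < dist x y := dist_pos.2 hxy
  rw [ENNReal.ofReal_div_of_pos (Real.rpow_pos_of_pos hd a), div_eq_mul_inv, ENNReal.rpow_neg,
    ← ENNReal.ofReal_rpow_of_nonneg (abs_nonneg _) hp.le, ← ENNReal.ofReal_rpow_of_pos hd,
    ← Real.enorm_eq_ofReal_abs, dist_comm, dist_eq_norm, ofReal_norm, enorm_sub_rev]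

section Gagliardo

variable {E : Type*} [NormedAddCommGroup E] [MeasurableSpace E] [BorelSpace E]
  [SecondCountableTopology E] {μ : Measure E} [SFinite μ] {p : ℝ} {u : E → ℝ}

theorem measurable_translateDiff (hu : Measurable u) : Measurable (translateDiff μ p u) :=
  Measurable.lintegral_prod_left (by fun_prop)

theorem gagliardo_eq_lintegral_translateDiff [μ.IsAddLeftInvariant] (hu : Measurable u)
    (hp : 0 < p) (a : ℝ) :
    gagliardo μ p a u = ∫⁻ h, ‖h‖ₑ ^ (-a) * translateDiff μ p u h ∂μ := calc
  _ = ∫⁻ x, ∫⁻ h, ‖u (x + h) - u x‖ₑ ^ p * ‖h‖ₑ ^ (-a) ∂μ ∂μ := by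
      refine lintegral_congr fun x ↦ ?_
      simp_rw [ofReal_abs_sub_rpow_div_dist_rpow u hp a x]
      rw [← lintegral_add_left_eq_self _ x]
      simp
  _ = ∫⁻ h, ∫⁻ x, ‖u (x + h) - u x‖ₑ ^ p * ‖h‖ₑ ^ (-a) ∂μ ∂μ :=
      lintegral_lintegral_swap (by fun_prop)
  _ = _ := by
      refine lintegral_congr fun h ↦ ?_
      rw [translateDiff, lintegral_mul_const _ (by fun_prop), mul_comm]

end Gagliardo

theorem tendsto_ofReal_mul_gagliardo {E : Type*} [NormedAddCommGroup E] [NormedSpace ℝ E]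
    [FiniteDimensional ℝ E] [MeasurableSpace E] [BorelSpace E] [Nontrivial E] {μ : Measure E}
    [μ.IsAddHaarMeasure] {p : ℝ} (hp : 1 ≤ p) {u : E → ℝ} (hu : MemLp u (ENNReal.ofReal p) μ)
    {s₀ : ℝ} (hs₀ : 0 < s₀) (hfin : gagliardo μ p (dim E + s₀ * p) u ≠ ∞) :
    Tendsto (fun s ↦ ENNReal.ofReal s * gagliardo μ p (dim E + s * p) u) (𝓝[>] 0)
      (𝓝 (2 * (∫⁻ x, ‖u x‖ₑ ^ p ∂μ) * (ENNReal.ofReal (dim E / p) * μ (ball 0 1)))) := by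
  have hp0 : 0 < p := one_pos.trans_le hp
  obtain ⟨v, hvm, huv⟩ : ∃ v, Measurable v ∧ u =ᵐ[μ] v :=
    ⟨_, hu.1.stronglyMeasurable_mk.measurable, hu.1.ae_eq_mk⟩
  have hv : MemLp v (ENNReal.ofReal p) μ := hu.ae_eq huv
  simp_rw [gagliardo_congr_ae huv] at hfin ⊢
  rw [lintegral_congr_ae (huv.mono fun x hx ↦ by rw [hx])]
  have hL : ∫⁻ x, ‖v x‖ₑ ^ p ∂μ ≠ ∞ := by
    rw [lintegral_enorm_rpow_eq_eLpNorm_rpow hp0]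
    exact rpow_ne_top_of_nonneg hp0.le hv.eLpNorm_ne_top
  simp_rw [gagliardo_eq_lintegral_translateDiff hvm hp0] at hfin ⊢
  have hnear := tendsto_ofReal_mul_setLIntegral_ball_rpow_neg hp0.le hs₀ hfin
  have hfar := tendsto_ofReal_mul_setLIntegral_compl_ball_rpow_neg hp0 (μ := μ)
    (measurable_translateDiff hvm) (mul_ne_top (rpow_ne_top_of_nonneg hp0.le ofNat_ne_top) hL)
    (translateDiff_le hp hv.1) (mul_ne_top ofNat_ne_top hL) (tendsto_translateDiff hp hv)
  simpa [← mul_add, lintegral_add_compl _ measurableSet_ball] using hnear.add hfar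

/-- The classical Maz'ya–Shaposhnikova asymptotic formula on `ℝ^N`: for `p ≥ 1` and
`u ∈ L^p(ℝ^N)` with finite Gagliardo seminorm for some `s₀ ∈ (0,1)`,
`lim_{s↓0} s ∬ |u(x)-u(y)|^p / |x-y|^{N+sp} dx dy = (2 N ω_N / p) ‖u‖_p^p`,
where `ω_N = π^{N/2}/Γ(N/2+1)`. -/
theorem mazya_shaposhnikova_euclidean
    (N : ℕ) (hN : 1 ≤ N) (p : ℝ) (hp : 1 ≤ p)
    (u : EuclideanSpace ℝ (Fin N) → ℝ)
    (hu : MemLp u (ENNReal.ofReal p))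
    (s₀ : ℝ) (hs₀ : s₀ ∈ Set.Ioo (0:ℝ) 1)
    (hfin : ∫⁻ x, ∫⁻ y,
        ENNReal.ofReal (|u x - u y| ^ p / dist x y ^ ((N : ℝ) + s₀ * p)) < ⊤) :
    Tendsto (fun s : ℝ => ENNReal.ofReal s *
        ∫⁻ x, ∫⁻ y, ENNReal.ofReal (|u x - u y| ^ p / dist x y ^ ((N : ℝ) + s * p)))
      (nhdsWithin 0 (Set.Ioi 0))
      (nhds (ENNReal.ofReal
          (2 * N * (Real.pi ^ ((N : ℝ) / 2) / Real.Gamma ((N : ℝ) / 2 + 1)) / p) *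
        ∫⁻ x, ENNReal.ofReal (|u x| ^ p))) := by
  have : Nonempty (Fin N) := ⟨⟨0, hN⟩⟩
  have hp0 : 0 < p := one_pos.trans_le hp
  have hlim := tendsto_ofReal_mul_gagliardo hp hu hs₀.1 (by simpa [gagliardo] using hfin.ne)
  rw [finrank_euclideanSpace_fin, EuclideanSpace.volume_ball, Fintype.card_fin] at hlim
  have hL : ∫⁻ x, ENNReal.ofReal (|u x| ^ p) = ∫⁻ x, ‖u x‖ₑ ^ p := lintegral_congr fun x ↦ by
    rw [Real.enorm_eq_ofReal_abs, ENNReal.ofReal_rpow_of_nonneg (abs_nonneg _) hp0.le]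
  have hπ : √Real.pi ^ N = Real.pi ^ ((N : ℝ) / 2) := by
    rw [Real.sqrt_eq_rpow, ← Real.rpow_natCast, ← Real.rpow_mul Real.pi_pos.le, one_div_mul_eq_div]
  convert hlim using 2
  · rfl
  rw [hL, ofReal_one, one_pow, one_mul, hπ, ← ENNReal.ofReal_mul (by positivity),
    mul_div_right_comm, mul_div_assoc, mul_assoc (2 : ℝ), ENNReal.ofReal_mul zero_le_two,
    ENNReal.ofReal_ofNat]
  ring
end

section
/- Let (X,d,m) be a metric measure space with m(X) < ∞, let V : [0,∞) → [0,∞) be C¹ strictly increasing with V(t) → ∞ as t → ∞, let p ≥ 1, and let (ρ_n)_{n∈ℕ} be mollifiers of radial type satisfying the approximation of the identity associated to V (Condition 3). Then for every u ∈ L^p(X,m) such that E_{ρ_{n₀}}(u) < ∞ for some n₀ ∈ ℕ, one has lim_{n→∞} E_{ρ_n}(u) = 0. -/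
open MeasureTheory Filter Topology Metric Set ENNReal

/-! For `n > n₀` and `r > 0` one has `ρ̃ₙ(r) ≤ (ρ̃ₙ(1) / ρ̃ₙ₀(1)) ρ̃ₙ₀(r) + ρ̃ₙ(1)`: for `r ≤ 1`
because `ρ̃ₙ / ρ̃ₙ₀` is non-decreasing (B), for `r > 1` because `ρ̃ₙ` is decreasing. Integrating,
`E_{ρₙ}(u) ≤ (ρ̃ₙ(1) / ρ̃ₙ₀(1)) E_{ρₙ₀}(u) + ρ̃ₙ(1) ∬ |u(x) - u(y)|^p`, and the last double
integral is finite since `m(X) < ∞` and `u ∈ Lᵖ`. Both coefficients tend to `0` by (A). -/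

lemma pos_of_strictAntiOn_Ioi_of_nonneg {f : ℝ → ℝ} (hf : StrictAntiOn f (Ioi 0))
    (hf_nonneg : ∀ r > 0, 0 ≤ f r) {r : ℝ} (hr : 0 < r) : 0 < f r :=
  (hf_nonneg (r + 1) (by linarith)).trans_lt (hf hr (by simp; linarith) (by linarith))

lemma le_div_mul_add_of_antitoneOn_of_monotoneOn_div {f g : ℝ → ℝ}
    (hf_nonneg : ∀ r > 0, 0 ≤ f r) (hg_pos : ∀ r > 0, 0 < g r) (hf : AntitoneOn f (Ioi 0))
    (hfg : MonotoneOn (fun r => f r / g r) (Ioi 0)) {r s : ℝ} (hr : 0 < r) (hs : 0 < s) :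
    f r ≤ f s / g s * g r + f s := by
  have hc : 0 ≤ f s / g s := div_nonneg (hf_nonneg s hs) (hg_pos s hs).le
  rcases le_total r s with hrs | hsr
  · have hratio := hfg hr hs hrs
    rw [div_le_iff₀ (hg_pos r hr)] at hratio
    linarith [hf_nonneg s hs]
  · nlinarith [hf hs hr hsr, (hg_pos r hr).le]

lemma ofReal_le_ofReal_div_mul_add_of_antitoneOn_of_monotoneOn_div {f g : ℝ → ℝ}
    (hf_nonneg : ∀ r > 0, 0 ≤ f r) (hg_pos : ∀ r > 0, 0 < g r) (hf : AntitoneOn f (Ioi 0))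
    (hfg : MonotoneOn (fun r => f r / g r) (Ioi 0)) {r s : ℝ} (hr : 0 < r) (hs : 0 < s) :
    ENNReal.ofReal (f r) ≤
      ENNReal.ofReal (f s / g s) * ENNReal.ofReal (g r) + ENNReal.ofReal (f s) := by
  have hc : 0 ≤ f s / g s := div_nonneg (hf_nonneg s hs) (hg_pos s hs).le
  rw [← ofReal_mul hc, ← ofReal_add (mul_nonneg hc (hg_pos r hr).le) (hf_nonneg s hs)]
  exact ofReal_le_ofReal
    (le_div_mul_add_of_antitoneOn_of_monotoneOn_div hf_nonneg hg_pos hf hfg hr hs)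

lemma ofReal_abs_sub_rpow_le {p : ℝ} (hp : 1 ≤ p) (s t : ℝ) :
    ENNReal.ofReal (|s - t| ^ p) ≤ 2 ^ (p - 1) * (‖s‖ₑ ^ p + ‖t‖ₑ ^ p) := by
  rw [← ENNReal.ofReal_rpow_of_nonneg (abs_nonneg _) (by linarith), ← Real.enorm_eq_ofReal_abs]
  calc ‖s - t‖ₑ ^ p ≤ (‖s‖ₑ + ‖t‖ₑ) ^ p := by gcongr; exact enorm_sub_le
    _ ≤ _ := ENNReal.rpow_add_le_mul_rpow_add_rpow _ _ hp

section Energy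

variable {X : Type*} [MeasurableSpace X] {μ : Measure X} {p : ℝ} {u : X → ℝ}

lemma lintegral_lintegral_ofReal_abs_sub_rpow_lt_top [IsFiniteMeasure μ] (hp : 1 ≤ p)
    (hu : MemLp u (ENNReal.ofReal p) μ) :
    ∫⁻ x, ∫⁻ y, ENNReal.ofReal (|u x - u y| ^ p) ∂μ ∂μ < ∞ := by
  have hK : ∫⁻ x, ‖u x‖ₑ ^ p ∂μ < ∞ := by
    simpa [ENNReal.toReal_ofReal (zero_le_one.trans hp)] using
      lintegral_rpow_enorm_lt_top_of_eLpNorm_lt_top (by simp; linarith) ofReal_ne_top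
        hu.eLpNorm_lt_top
  calc ∫⁻ x, ∫⁻ y, ENNReal.ofReal (|u x - u y| ^ p) ∂μ ∂μ
      ≤ ∫⁻ x, ∫⁻ y, 2 ^ (p - 1) * (‖u x‖ₑ ^ p + ‖u y‖ₑ ^ p) ∂μ ∂μ := by
        gcongr with x y; exact ofReal_abs_sub_rpow_le hp _ _
    _ = 2 ^ (p - 1) * ((∫⁻ x, ‖u x‖ₑ ^ p ∂μ) * μ univ + (∫⁻ x, ‖u x‖ₑ ^ p ∂μ) * μ univ) := by
        have htwo : (2 : ℝ≥0∞) ^ (p - 1) ≠ ∞ := by finiteness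
        simp only [lintegral_const_mul' _ _ htwo, lintegral_add_left measurable_const,
          lintegral_const]
        rw [lintegral_add_right _ measurable_const,
          lintegral_mul_const' _ _ (measure_ne_top μ univ), lintegral_const]
    _ < ∞ := by finiteness

lemma energy_le_mul_add [MeasurableSingletonClass X] [SFinite μ] {ρ ρ₀ : X → X → ℝ≥0∞}
    (hu : AEMeasurable u μ) {a b : ℝ≥0∞} (ha : a ≠ ∞)
    (hρ : ∀ x y, y ≠ x → ρ x y ≤ a * ρ₀ x y + b) :
    energy μ p ρ u ≤
      a * energy μ p ρ₀ u + b * ∫⁻ x, ∫⁻ y, ENNReal.ofReal (|u x - u y| ^ p) ∂μ ∂μ := by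
  set f : X → X → ℝ≥0∞ := fun x y => ENNReal.ofReal (|u x - u y| ^ p)
  have hf : ∀ x, AEMeasurable (f x) μ := fun x =>
    ((aemeasurable_const.sub hu).abs.pow_const p).ennreal_ofReal
  have hF : AEMeasurable (fun x => ∫⁻ y, f x y ∂μ) μ :=
    AEMeasurable.lintegral_prod_right
      ((hu.comp_fst.sub hu.comp_snd).abs.pow_const p).ennreal_ofReal
  have hinner : ∀ x, ∫⁻ y in {y | y ≠ x}, f x y * ρ x y ∂μ ≤
      b * ∫⁻ y, f x y ∂μ + a * ∫⁻ y in {y | y ≠ x}, f x y * ρ₀ x y ∂μ := fun x =>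
    calc ∫⁻ y in {y | y ≠ x}, f x y * ρ x y ∂μ
        ≤ ∫⁻ y in {y | y ≠ x}, b * f x y + a * (f x y * ρ₀ x y) ∂μ := by
          refine setLIntegral_mono' (measurableSet_singleton x).compl fun y hy => ?_
          calc f x y * ρ x y ≤ f x y * (a * ρ₀ x y + b) := by gcongr; exact hρ x y hy
            _ = _ := by ring
      _ = b * ∫⁻ y in {y | y ≠ x}, f x y ∂μ + a * ∫⁻ y in {y | y ≠ x}, f x y * ρ₀ x y ∂μ := by
          rw [lintegral_add_left' ((hf x).restrict.const_mul b),
            lintegral_const_mul'' _ (hf x).restrict,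
            lintegral_const_mul' _ _ ha]
      _ ≤ _ := by gcongr; exact Measure.restrict_le_self
  calc energy μ p ρ u
      ≤ ∫⁻ x, b * ∫⁻ y, f x y ∂μ + a * ∫⁻ y in {y | y ≠ x}, f x y * ρ₀ x y ∂μ ∂μ :=
        lintegral_mono hinner
    _ = _ := by
        rw [lintegral_add_left' (hF.const_mul b), lintegral_const_mul'' _ hF,
          lintegral_const_mul' _ _ ha, add_comm]
        rfl

end Energy

theorem energy_tendsto_zero_of_finite_measure_general
    {X : Type*} [MetricSpace X]
    [MeasurableSpace X] [BorelSpace X]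
    (μ : Measure X)
    (hfin_meas : μ Set.univ < ⊤)
    (p : ℝ) (hp : 1 ≤ p)
    -- Condition 3: mollifiers of radial type, approximation of the identity associated to `V`
    (ρt : ℕ → ℝ → ℝ)
    (hρ_nonneg : ∀ (n : ℕ), ∀ r > (0:ℝ), 0 ≤ ρt n r)
    (hρ_anti : ∀ n, StrictAntiOn (ρt n) (Set.Ioi 0))
    -- Condition 3 (A)
    (hρ_lim : ∀ r > (0:ℝ), Tendsto (fun n => ρt n r) atTop (nhds 0))
    -- Condition 3 (B)
    (hρ_ratio : ∀ i j : ℕ, i < j → MonotoneOn (fun r => ρt j r / ρt i r) (Set.Ioi 0))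
    (u : X → ℝ) (hu : MemLp u (ENNReal.ofReal p) μ)
    (hfin : ∃ n₀ : ℕ, energy μ p (fun x y => ENNReal.ofReal (ρt n₀ (dist x y))) u < ⊤) :
    Tendsto (fun n => energy μ p (fun x y => ENNReal.ofReal (ρt n (dist x y))) u) atTop
      (nhds 0) := by
  have : IsFiniteMeasure μ := ⟨hfin_meas⟩
  obtain ⟨n₀, hE₀⟩ := hfin
  set E₀ := energy μ p (fun x y => ENNReal.ofReal (ρt n₀ (dist x y))) u
  set C := ∫⁻ x, ∫⁻ y, ENNReal.ofReal (|u x - u y| ^ p) ∂μ ∂μ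
  have hC : C < ∞ := lintegral_lintegral_ofReal_abs_sub_rpow_lt_top hp hu
  have hpos₀ : ∀ r > 0, 0 < ρt n₀ r := fun _ =>
    pos_of_strictAntiOn_Ioi_of_nonneg (hρ_anti n₀) (hρ_nonneg n₀)
  have hbound : ∀ n > n₀, energy μ p (fun x y => ENNReal.ofReal (ρt n (dist x y))) u ≤
      ENNReal.ofReal (ρt n 1 / ρt n₀ 1) * E₀ + ENNReal.ofReal (ρt n 1) * C := fun n hn =>
    energy_le_mul_add hu.1.aemeasurable ofReal_ne_top fun x y hxy =>
      ofReal_le_ofReal_div_mul_add_of_antitoneOn_of_monotoneOn_div (hρ_nonneg n) hpos₀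
        (hρ_anti n).antitoneOn (hρ_ratio n₀ n hn) (dist_pos.2 hxy.symm) one_pos
  have hlim : Tendsto
      (fun n => ENNReal.ofReal (ρt n 1 / ρt n₀ 1) * E₀ + ENNReal.ofReal (ρt n 1) * C)
      atTop (𝓝 0) := by
    have hρ1 := ENNReal.tendsto_ofReal (hρ_lim 1 one_pos)
    have hratio := ENNReal.tendsto_ofReal ((hρ_lim 1 one_pos).div_const (ρt n₀ 1))
    rw [ofReal_zero] at hρ1
    rw [zero_div, ofReal_zero] at hratio
    simpa using
      (ENNReal.Tendsto.mul_const hratio (.inr hE₀.ne)).add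
        (ENNReal.Tendsto.mul_const hρ1 (.inr hC.ne))
  exact tendsto_of_tendsto_of_tendsto_of_le_of_le' tendsto_const_nhds hlim
    (.of_forall fun _ => zero_le) ((eventually_gt_atTop n₀).mono hbound)

/-- Remark 2.18: on a metric measure space of finite measure, radial mollifiers satisfying
Condition 3 give `E_{ρ_n}(u) → 0` for every `u ∈ L^p` with finite energy for some `n₀`. -/
theorem energy_tendsto_zero_of_finite_measure
    {X : Type*} [MetricSpace X] [CompleteSpace X] [TopologicalSpace.SeparableSpace X]
    [MeasurableSpace X] [BorelSpace X]
    (μ : Measure X) [IsLocallyFiniteMeasure μ] [μ.IsOpenPosMeasure]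
    (hfin_meas : μ Set.univ < ⊤)
    (p : ℝ) (hp : 1 ≤ p)
    -- `V` is a `C¹` strictly increasing function on `[0,∞)` with `V(t) → ∞`
    (V : ℝ → ℝ) (hV0 : 0 ≤ V 0) (hVmono : StrictMonoOn V (Set.Ici 0))
    (hVC1 : ContDiffOn ℝ 1 V (Set.Ici 0)) (hVtop : Tendsto V atTop atTop)
    -- Condition 3: mollifiers of radial type, approximation of the identity associated to `V`
    (ρt : ℕ → ℝ → ℝ)
    (hρ_nonneg : ∀ (n : ℕ), ∀ r > (0:ℝ), 0 ≤ ρt n r)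
    (hρ_anti : ∀ n, StrictAntiOn (ρt n) (Set.Ioi 0))
    (hρ_C1 : ∀ n, ContDiffOn ℝ 1 (ρt n) (Set.Ioi 0))
    -- Condition 3 (A)
    (hρ_lim : ∀ r > (0:ℝ), Tendsto (fun n => ρt n r) atTop (nhds 0))
    (hρ_V : ∀ n, Tendsto (fun r => ρt n r * V r) atTop (nhds 0))
    -- Condition 3 (B)
    (hρ_ratio : ∀ i j : ℕ, i < j → MonotoneOn (fun r => ρt j r / ρt i r) (Set.Ioi 0))
    -- Condition 3 (C): `lim_{R→∞} lim_{n→∞} ∫_R^∞ S(r) ρ̃_n(r) dr = 1`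
    (I : ℝ → ℝ)
    (hI : ∀ R > (0:ℝ), Tendsto (fun n => ∫ r in Set.Ioi R, deriv V r * ρt n r) atTop (nhds (I R)))
    (hI_one : Tendsto I atTop (nhds 1))
    (u : X → ℝ) (hu : MemLp u (ENNReal.ofReal p) μ)
    (hfin : ∃ n₀ : ℕ, energy μ p (fun x y => ENNReal.ofReal (ρt n₀ (dist x y))) u < ⊤) :
    Tendsto (fun n => energy μ p (fun x y => ENNReal.ofReal (ρt n (dist x y))) u) atTop
      (nhds 0) :=
  energy_tendsto_zero_of_finite_measure_general μ hfin_meas p hp ρt hρ_nonneg hρ_anti hρ_lim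
    hρ_ratio u hu hfin
end
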